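/- arXiv:2008.10709 — 9 statements merged into one kernel-verified Lean document; each statement's English description precedes it below -/
import Mathlib

section
/- Let $\phi$ be a worker-task assignment function that assigns workers $[w]$ to task sets $T \subseteq [wt]$ (i.e., $\phi$ is defined only on sets, not multisets) with switching cost $s$ on pairs of adjacent subsets. Then there exists a worker-task assignment function $\phi'$ assigning workers $[w]$ to task multisets $T \subseteq [t]$ of size $w$ that also has switching cost at most $s$. -/
open Finset

private lemma finIcoCard (w a b : ℕ) (hb : b ≤ w) :
    (Finset.univ.filter (fun j : Fin w => a ≤ (j : ℕ) ∧ (j : ℕ) < b)).card = b - a := by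
  have h1 : (Finset.univ.filter (fun j : Fin w => a ≤ (j : ℕ) ∧ (j : ℕ) < b)).card
      = ((Finset.range w).filter (fun j => a ≤ j ∧ j < b)).card := by
    rw [Finset.card_filter, Finset.card_filter,
      Fin.sum_univ_eq_sum_range (fun n => if a ≤ n ∧ n < b then (1 : ℕ) else 0)]
  rw [h1]
  have h2 : ((Finset.range w).filter (fun j => a ≤ j ∧ j < b)) = Finset.Ico a b := by
    ext j; simp [Finset.mem_Ico]; omega
  rw [h2, Nat.card_Ico]

private lemma fiberCard (w t : ℕ) (f g : Fin t → ℕ) (i : Fin t) (hf : f i ≤ w) :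
    (Finset.univ.filter
      (fun p : Fin t × Fin w => p.1 = i ∧ g p.1 ≤ (p.2 : ℕ) ∧ (p.2 : ℕ) < f p.1)).card
      = f i - g i := by
  rw [← finIcoCard w (g i) (f i) hf]
  refine Finset.card_bij' (fun p _ => p.2) (fun j _ => (i, j)) ?_ ?_ ?_ ?_
  · intro p hp; simp at hp ⊢; obtain ⟨h1, h2⟩ := hp; subst h1; exact h2
  · intro j hj; simp at hj ⊢; exact hj
  · intro p hp; obtain ⟨p1, p2⟩ := p; simp at hp; obtain ⟨rfl, -⟩ := hp; rfl
  · intro j hj; rfl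

private def WTS (w t : ℕ) (T : Multiset (Fin t)) : Finset (Fin t × Fin w) :=
  Finset.univ.filter (fun p => (p.2 : ℕ) < T.count p.1)

private lemma card_eq_sum_count' (t : ℕ) (m : Multiset (Fin t)) :
    Multiset.card m = ∑ i : Fin t, m.count i := by
  rw [← Multiset.toFinset_sum_count_eq]
  exact Finset.sum_subset (Finset.subset_univ _) (fun x _ hx =>
    Multiset.count_eq_zero_of_notMem (by simpa using hx))

private lemma map_fst_WTS (w t : ℕ) (T : Multiset (Fin t)) (hT : ∀ i, T.count i ≤ w) :
    ((WTS w t T).val.map Prod.fst) = T := by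
  refine Multiset.ext.mpr fun i => ?_
  rw [Multiset.count_map Prod.fst (WTS w t T).val i]
  have h : Multiset.card (Multiset.filter (fun a => i = Prod.fst a) (WTS w t T).val)
      = (Finset.univ.filter
        (fun p : Fin t × Fin w => p.1 = i ∧ (0:ℕ) ≤ (p.2 : ℕ) ∧ (p.2 : ℕ) < T.count p.1)).card := by
    congr 1
    have : Multiset.filter (fun a => i = Prod.fst a) (WTS w t T).val
        = ((WTS w t T).filter (fun a => i = Prod.fst a)).val := rfl
    rw [this]
    congr 1
    ext p
    simp [WTS, eq_comm]
    tauto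
  rw [h, fiberCard w t (fun j => T.count j) (fun _ => 0) i (hT i)]
  omega

private lemma sdiff_WTS (w t : ℕ) (T₁ T₂ : Multiset (Fin t)) (h1 : ∀ i, T₁.count i ≤ w) :
    (WTS w t T₁ \ WTS w t T₂).card = Multiset.card (T₁ - T₂) := by
  have hset : WTS w t T₁ \ WTS w t T₂
      = Finset.univ.filter
        (fun p : Fin t × Fin w => T₂.count p.1 ≤ (p.2 : ℕ) ∧ (p.2 : ℕ) < T₁.count p.1) := by
    ext p; simp [WTS, Finset.mem_sdiff]; omega
  rw [hset, Finset.card_eq_sum_card_fiberwise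
    (f := Prod.fst) (t := (Finset.univ : Finset (Fin t))) (fun x _ => Finset.mem_univ _)]
  have hR : Multiset.card (T₁ - T₂) = ∑ i : Fin t, (T₁.count i - T₂.count i) := by
    rw [card_eq_sum_count']
    exact Finset.sum_congr rfl fun i _ => Multiset.count_sub i T₁ T₂
  rw [hR]
  refine Finset.sum_congr rfl fun i _ => ?_
  rw [← fiberCard w t (fun j => T₁.count j) (fun j => T₂.count j) i (h1 i)]
  congr 1
  ext p
  simp
  tauto

/-- reduction from the multiset worker-task assignment problem with `w` workers
and `t` tasks to the set version with `w` workers and `w*t` tasks.  If `φ` assigns workers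
`Fin w` bijectively to each task *set* `T ⊆ Fin (w*t)` of size `w`, with switching cost `s`
on adjacent sets, then there is an assignment function `φ'` on task *multisets* over `Fin t`
of size `w` that also has switching cost at most `s`. -/
theorem multiset_to_set_reduction (w t s : ℕ)
    (φ : Finset (Fin (w * t)) → (Fin w → Fin (w * t)))
    (hφ : ∀ T : Finset (Fin (w * t)), T.card = w →
      Function.Injective (φ T) ∧ ∀ i, φ T i ∈ T)
    (hcost : ∀ T₁ T₂ : Finset (Fin (w * t)), T₁.card = w → T₂.card = w →
      (T₁ \ T₂).card = 1 → (T₂ \ T₁).card = 1 →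
      (Finset.univ.filter (fun i => φ T₁ i ≠ φ T₂ i)).card ≤ s) :
    ∃ φ' : Multiset (Fin t) → (Fin w → Fin t),
      (∀ T : Multiset (Fin t), Multiset.card T = w →
        Multiset.map (φ' T) (Finset.univ.val : Multiset (Fin w)) = T) ∧
      (∀ T₁ T₂ : Multiset (Fin t), Multiset.card T₁ = w → Multiset.card T₂ = w →
        Multiset.card (T₁ - T₂) = 1 → Multiset.card (T₂ - T₁) = 1 →
        (Finset.univ.filter (fun i => φ' T₁ i ≠ φ' T₂ i)).card ≤ s) := by
  classical
  let e : Fin t × Fin w ≃ Fin (w * t) :=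
    finProdFinEquiv.trans (finCongr (mul_comm t w))
  let F : Multiset (Fin t) → Finset (Fin (w * t)) :=
    fun T => (WTS w t T).map e.toEmbedding
  have hcount : ∀ T : Multiset (Fin t), Multiset.card T = w → ∀ i, T.count i ≤ w := by
    intro T hT i
    calc T.count i ≤ Multiset.card T := Multiset.count_le_card i T
      _ = w := hT
  have hFval : ∀ T, (F T).val = (WTS w t T).val.map e := fun T => rfl
  have hFcard : ∀ T : Multiset (Fin t), Multiset.card T = w → (F T).card = w := by
    intro T hT
    have := map_fst_WTS w t T (hcount T hT)
    have hc : (WTS w t T).card = w := by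
      have := congrArg Multiset.card this
      simpa [hT] using this
    simpa [F, Finset.card_map] using hc
  refine ⟨fun T i => (e.symm (φ (F T) i)).1, ?_, ?_⟩
  · intro T hT
    obtain ⟨hinj, hmem⟩ := hφ (F T) (hFcard T hT)
    have himg : Finset.univ.image (φ (F T)) = F T := by
      apply Finset.eq_of_subset_of_card_le
      · intro x hx
        simp only [Finset.mem_image] at hx
        obtain ⟨i, _, rfl⟩ := hx
        exact hmem i
      · rw [hFcard T hT, Finset.card_image_of_injective _ hinj, Finset.card_univ,
          Fintype.card_fin]
    have hmapval : Multiset.map (φ (F T)) (Finset.univ.val : Multiset (Fin w))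
        = (F T).val := by
      have hval : (Finset.univ.image (φ (F T))).val
          = Multiset.map (φ (F T)) (Finset.univ.val : Multiset (Fin w)) := by
        rw [Finset.image_val, Multiset.dedup_eq_self.mpr ((Finset.univ.nodup).map hinj)]
      rw [← hval, himg]
    calc Multiset.map (fun i => (e.symm (φ (F T) i)).1) (Finset.univ.val : Multiset (Fin w))
        = Multiset.map (fun x => (e.symm x).1)
            (Multiset.map (φ (F T)) (Finset.univ.val : Multiset (Fin w))) := by
          rw [Multiset.map_map]; rfl
      _ = Multiset.map (fun x => (e.symm x).1) ((WTS w t T).val.map e) := by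
          rw [hmapval, hFval]
      _ = (WTS w t T).val.map Prod.fst := by
          rw [Multiset.map_map]; simp
      _ = T := map_fst_WTS w t T (hcount T hT)
  · intro T₁ T₂ h₁ h₂ hd₁ hd₂
    have hc₁ := hFcard T₁ h₁
    have hc₂ := hFcard T₂ h₂
    have hsd₁ : (F T₁ \ F T₂).card = 1 := by
      have : F T₁ \ F T₂ = (WTS w t T₁ \ WTS w t T₂).map e.toEmbedding := by
        simp only [F, Finset.map_eq_image]
        exact (Finset.image_sdiff _ _ e.injective).symm
      rw [this, Finset.card_map, sdiff_WTS w t T₁ T₂ (hcount T₁ h₁), hd₁]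
    have hsd₂ : (F T₂ \ F T₁).card = 1 := by
      have : F T₂ \ F T₁ = (WTS w t T₂ \ WTS w t T₁).map e.toEmbedding := by
        simp only [F, Finset.map_eq_image]
        exact (Finset.image_sdiff _ _ e.injective).symm
      rw [this, Finset.card_map, sdiff_WTS w t T₂ T₁ (hcount T₂ h₂), hd₂]
    refine le_trans (Finset.card_le_card ?_) (hcost (F T₁) (F T₂) hc₁ hc₂ hsd₁ hsd₂)
    intro i hi
    simp only [Finset.mem_filter, Finset.mem_univ, true_and] at hi ⊢
    intro h
    exact hi (by rw [h])
end

section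
/- In the random-permutation algorithm, for any two adjacent task sets $T_1, T_2 \subseteq [t]$ of size $w$, the sets of $i$-remainder tasks $A_i$ (for input $T_1$) and $B_i$ (for input $T_2$) satisfy $|A_i \setminus B_i| \le 1$ for every $i \in \{0, 1, \dots, w\}$. -/
/-- The element of `A` minimizing the preference-rank function `f`
(the "most preferred" task of `A`); junk value if `A = ∅`. -/
noncomputable def argminTask {t : ℕ} (ht : 0 < t) (f : Fin t → ℕ) (A : Finset (Fin t)) :
    Fin t :=
  if h : A.Nonempty then (A.exists_min_image f h).choose else ⟨0, ht⟩

/-- The set of `i`-remainder tasks of the greedy (random-permutation) algorithm: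
workers `0, 1, …, i-1` have each been assigned, in order, their most preferred
(according to the rank functions `σ`) not-yet-assigned task of `T`. -/
noncomputable def remainderTasks {t : ℕ} (ht : 0 < t) (σ : ℕ → Fin t → ℕ)
    (T : Finset (Fin t)) : ℕ → Finset (Fin t)
  | 0 => T
  | i + 1 =>
      (remainderTasks ht σ T i).erase
        (argminTask ht (σ i) (remainderTasks ht σ T i))

lemma argminTask_mem {t : ℕ} (ht : 0 < t) (f : Fin t → ℕ) {A : Finset (Fin t)}
    (h : A.Nonempty) : argminTask ht f A ∈ A := by
  rw [argminTask, dif_pos h]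
  exact (A.exists_min_image f h).choose_spec.1

lemma argminTask_min {t : ℕ} (ht : 0 < t) (f : Fin t → ℕ) {A : Finset (Fin t)}
    (h : A.Nonempty) {x : Fin t} (hx : x ∈ A) : f (argminTask ht f A) ≤ f x := by
  rw [argminTask, dif_pos h]
  exact (A.exists_min_image f h).choose_spec.2 x hx

lemma step_one_side {t : ℕ} (ht : 0 < t) (f : Fin t → ℕ) (hf : Function.Injective f)
    (A B : Finset (Fin t)) (h1 : (A \ B).card ≤ 1) (h2 : (B \ A).card ≤ 1) :
    ((A.erase (argminTask ht f A)) \ (B.erase (argminTask ht f B))).card ≤ 1 := by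
  set a := argminTask ht f A with hadef
  set b := argminTask ht f B with hbdef
  by_cases hA : A.Nonempty
  · by_cases hB : B.Nonempty
    · have haA : a ∈ A := argminTask_mem ht f hA
      have hbB : b ∈ B := argminTask_mem ht f hB
      by_cases hab : a = b
      · refine le_trans (Finset.card_le_card ?_) h1
        intro x hx
        simp only [Finset.mem_sdiff, Finset.mem_erase] at hx ⊢
        refine ⟨hx.1.2, fun hxB => hx.2 ⟨hab ▸ hx.1.1, hxB⟩⟩
      · -- a ≠ b; then not both (a ∈ B) and (b ∈ A)
        have hkey : a ∉ B ∨ b ∉ A := by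
          by_contra hc
          push_neg at hc
          exact hab (hf (le_antisymm (argminTask_min ht f hA hc.2)
            (argminTask_min ht f hB hc.1)))
        rcases hkey with haB | hbA
        · -- A \ B = {a}; new difference ⊆ {b}
          refine le_trans (Finset.card_le_card (s := _) (t := {b}) ?_) (by simp)
          intro x hx
          simp only [Finset.mem_sdiff, Finset.mem_erase] at hx
          simp only [Finset.mem_singleton]
          by_contra hxb
          have hxB : x ∉ B := fun hxB => hx.2 ⟨hxb, hxB⟩
          have hx1 : x ∈ A \ B := Finset.mem_sdiff.mpr ⟨hx.1.2, hxB⟩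
          have ha1 : a ∈ A \ B := Finset.mem_sdiff.mpr ⟨haA, haB⟩
          exact hx.1.1 (Finset.card_le_one.mp h1 x hx1 a ha1)
        · refine le_trans (Finset.card_le_card ?_) h1
          intro x hx
          simp only [Finset.mem_sdiff, Finset.mem_erase] at hx ⊢
          refine ⟨hx.1.2, fun hxB => ?_⟩
          rcases eq_or_ne x b with rfl | hxb
          · exact hbA hx.1.2
          · exact hx.2 ⟨hxb, hxB⟩
    · -- B empty: A \ B = A
      rw [Finset.not_nonempty_iff_eq_empty] at hB
      subst hB
      simp only [Finset.erase_empty, Finset.sdiff_empty] at *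
      exact le_trans (Finset.card_le_card (Finset.erase_subset _ _)) h1
  · rw [Finset.not_nonempty_iff_eq_empty] at hA
    subst hA
    simp

/-- for adjacent task sets `T₁, T₂` of size `w`, the `i`-remainder
sets `A_i` (for `T₁`) and `B_i` (for `T₂`) satisfy `|A_i \ B_i| ≤ 1` for all `0 ≤ i ≤ w`. -/
theorem remainder_sets_close (w t : ℕ) (ht : 0 < t)
    (σ : ℕ → Fin t → ℕ) (hσ : ∀ i, Function.Injective (σ i))
    (T₁ T₂ : Finset (Fin t)) (h₁ : T₁.card = w) (h₂ : T₂.card = w)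
    (hadj₁ : (T₁ \ T₂).card = 1) (hadj₂ : (T₂ \ T₁).card = 1) :
    ∀ i ≤ w, ((remainderTasks ht σ T₁ i) \ (remainderTasks ht σ T₂ i)).card ≤ 1 := by
  have key : ∀ i, ((remainderTasks ht σ T₁ i) \ (remainderTasks ht σ T₂ i)).card ≤ 1 ∧
      ((remainderTasks ht σ T₂ i) \ (remainderTasks ht σ T₁ i)).card ≤ 1 := by
    intro i
    induction i with
    | zero => exact ⟨hadj₁.le, hadj₂.le⟩
    | succ n ih =>
      exact ⟨step_one_side ht (σ n) (hσ n) _ _ ih.1 ih.2,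
        step_one_side ht (σ n) (hσ n) _ _ ih.2 ih.1⟩
  exact fun i _ => (key i).1
end

section
/- Fix hash functions $h_1 : [w] \to [k]$ and $h_2 : [n] \to [k]$, and let $\psi$ be the $k$-bin hash partial-assignment algorithm determined by $(h_1, h_2)$. Then for any two unit-distance worker/task inputs $(W_1, T_1)$ and $(W_2, T_2)$, the sets of worker-task assignments made by $\psi(W_1, T_1)$ and $\psi(W_2, T_2)$ differ in at most $O(1)$ (in fact, at most 4) assignments. -/
open Finset

/-- The `k`-bin hash partial-assignment algorithm determined by hash functions
`h₁ : [w] → [k]` and `h₂ : [n] → [k]`: every worker `ω ∈ W` goes to bin `h₁ ω`, every task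
`τ ∈ T` goes to bin `h₂ τ`, and in each bin containing at least one worker and at least one
task the smallest worker of the bin is matched to the smallest task of the bin.
The result is the set of worker-task assignments made. -/
def binMatch {w n k : ℕ} (h₁ : Fin w → Fin k) (h₂ : Fin n → Fin k)
    (W : Finset (Fin w)) (T : Finset (Fin n)) : Finset (Fin w × Fin n) :=
  Finset.univ.biUnion fun b : Fin k =>
    if hW : (W.filter fun ω => h₁ ω = b).Nonempty then
      if hT : (T.filter fun τ => h₂ τ = b).Nonempty then
        {((W.filter fun ω => h₁ ω = b).min' hW, (T.filter fun τ => h₂ τ = b).min' hT)}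
      else ∅
    else ∅

/-- for fixed hash functions, on any two unit-distance worker/task inputs the
`k`-bin hash makes sets of assignments differing in at most `4` assignments
(symmetric difference at most `4`), i.e. the `k`-bin hash is `O(1)`-switching-cost bounded. -/
theorem binMatch_switching_cost {w n k : ℕ} (h₁ : Fin w → Fin k) (h₂ : Fin n → Fin k)
    (W₁ W₂ : Finset (Fin w)) (T₁ T₂ : Finset (Fin n))
    (hunit : (W₁ \ W₂).card + (W₂ \ W₁).card + (T₁ \ T₂).card + (T₂ \ T₁).card ≤ 2) :
    ((binMatch h₁ h₂ W₁ T₁) \ (binMatch h₁ h₂ W₂ T₂)).card +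
      ((binMatch h₁ h₂ W₂ T₂) \ (binMatch h₁ h₂ W₁ T₁)).card ≤ 4 := by
  classical
  -- per-bin contribution
  let f : Finset (Fin w) → Finset (Fin n) → Fin k → Finset (Fin w × Fin n) := fun W T b =>
    if hW : (W.filter fun ω => h₁ ω = b).Nonempty then
      if hT : (T.filter fun τ => h₂ τ = b).Nonempty then
        {((W.filter fun ω => h₁ ω = b).min' hW, (T.filter fun τ => h₂ τ = b).min' hT)}
      else ∅
    else ∅
  have hbm : ∀ W T, binMatch h₁ h₂ W T = Finset.univ.biUnion (f W T) := fun _ _ => rfl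
  have hcard : ∀ W T b, (f W T b).card ≤ 1 := by
    intro W T b
    simp only [f]
    split_ifs <;> simp
  set bad : Finset (Fin k) :=
    ((W₁ \ W₂) ∪ (W₂ \ W₁)).image h₁ ∪ ((T₁ \ T₂) ∪ (T₂ \ T₁)).image h₂ with hbad
  have hbadcard : bad.card ≤ 2 := by
    calc bad.card ≤ (((W₁ \ W₂) ∪ (W₂ \ W₁)).image h₁).card
          + (((T₁ \ T₂) ∪ (T₂ \ T₁)).image h₂).card := card_union_le _ _
      _ ≤ ((W₁ \ W₂) ∪ (W₂ \ W₁)).card + ((T₁ \ T₂) ∪ (T₂ \ T₁)).card :=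
          Nat.add_le_add card_image_le card_image_le
      _ ≤ ((W₁ \ W₂).card + (W₂ \ W₁).card) + ((T₁ \ T₂).card + (T₂ \ T₁).card) :=
          Nat.add_le_add (card_union_le _ _) (card_union_le _ _)
      _ ≤ 2 := by omega
  have hgood : ∀ b : Fin k, b ∉ bad → f W₁ T₁ b = f W₂ T₂ b := by
    intro b hb
    simp only [hbad, mem_union, mem_image, mem_sdiff, not_or, not_exists] at hb
    push_neg at hb
    obtain ⟨hbW, hbT⟩ := hb
    have hW : W₁.filter (fun ω => h₁ ω = b) = W₂.filter (fun ω => h₁ ω = b) := by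
      ext ω
      simp only [mem_filter]
      constructor
      · rintro ⟨hω, hh⟩
        refine ⟨?_, hh⟩
        by_contra h2
        exact (hbW ω (Or.inl ⟨hω, h2⟩)) hh
      · rintro ⟨hω, hh⟩
        refine ⟨?_, hh⟩
        by_contra h2
        exact (hbW ω (Or.inr ⟨hω, h2⟩)) hh
    have hT : T₁.filter (fun τ => h₂ τ = b) = T₂.filter (fun τ => h₂ τ = b) := by
      ext τ
      simp only [mem_filter]
      constructor
      · rintro ⟨hτ, hh⟩
        refine ⟨?_, hh⟩
        by_contra h2
        exact (hbT τ (Or.inl ⟨hτ, h2⟩)) hh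
      · rintro ⟨hτ, hh⟩
        refine ⟨?_, hh⟩
        by_contra h2
        exact (hbT τ (Or.inr ⟨hτ, h2⟩)) hh
    simp only [f, hW, hT]
  have key : ∀ (Wa Wb : Finset (Fin w)) (Ta Tb : Finset (Fin n)),
      (∀ b : Fin k, b ∉ bad → f Wa Ta b = f Wb Tb b) →
      ((binMatch h₁ h₂ Wa Ta) \ (binMatch h₁ h₂ Wb Tb)).card ≤ 2 := by
    intro Wa Wb Ta Tb hg
    have hsub : (binMatch h₁ h₂ Wa Ta) \ (binMatch h₁ h₂ Wb Tb) ⊆ bad.biUnion (f Wa Ta) := by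
      intro p hp
      rw [mem_sdiff, hbm, hbm] at hp
      obtain ⟨hpA, hpB⟩ := hp
      rw [mem_biUnion] at hpA
      obtain ⟨b, -, hb⟩ := hpA
      by_cases hbb : b ∈ bad
      · exact mem_biUnion.2 ⟨b, hbb, hb⟩
      · exact absurd (mem_biUnion.2 ⟨b, mem_univ b, (hg b hbb) ▸ hb⟩) hpB
    calc ((binMatch h₁ h₂ Wa Ta) \ (binMatch h₁ h₂ Wb Tb)).card
        ≤ (bad.biUnion (f Wa Ta)).card := card_le_card hsub
      _ ≤ ∑ b ∈ bad, (f Wa Ta b).card := card_biUnion_le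
      _ ≤ ∑ _b ∈ bad, 1 := sum_le_sum fun b _ => hcard _ _ b
      _ = bad.card := by simp
      _ ≤ 2 := hbadcard
  have h1 := key W₁ W₂ T₁ T₂ hgood
  have h2 := key W₂ W₁ T₂ T₁ fun b hb => (hgood b hb).symm
  omega
end

section
/- Fix hash functions $h_1 : [w] \to [k]$ and $h_2 : [n] \to [k]$, and let $\psi$ be the corresponding $k$-bin hash partial-assignment algorithm. For any two worker/task inputs $I_1 = (W_1, T_1)$ and $I_2 = (W_2, T_2)$, the unmatched-residue outputs $O_1 = (W_1', T_1')$ and $O_2 = (W_2', T_2')$ satisfy $d(O_1, O_2) \le d(I_1, I_2)$, where $d((A, B), (C, D)) = |A \setminus C| + |C \setminus A| + |B \setminus D| + |D \setminus B|$. In particular, the $k$-bin hash is composition-friendly: unit-distance inputs yield unit-distance outputs. -/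
open Finset

/-- The unmatched residue (worker/task output) of the `k`-bin hash on input `(W, T)`. -/
def binResidue {w n k : ℕ} (h₁ : Fin w → Fin k) (h₂ : Fin n → Fin k)
    (W : Finset (Fin w)) (T : Finset (Fin n)) : Finset (Fin w) × Finset (Fin n) :=
  (W \ (binMatch h₁ h₂ W T).image Prod.fst, T \ (binMatch h₁ h₂ W T).image Prod.snd)

/-- The difference-score `d((A,B),(C,D)) = |A\C| + |C\A| + |B\D| + |D\B|`. -/
def diffScore {w n : ℕ} (I₁ I₂ : Finset (Fin w) × Finset (Fin n)) : ℕ :=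
  (I₁.1 \ I₂.1).card + (I₂.1 \ I₁.1).card + (I₁.2 \ I₂.2).card + (I₂.2 \ I₁.2).card

open Finset

variable {α β : Type*} [LinearOrder α] [LinearOrder β] [DecidableEq α] [DecidableEq β]

/-- erase the min of `A` when both `A` is nonempty and condition `c` holds. -/
def emin (A : Finset α) (c : Prop) [Decidable c] : Finset α :=
  if h : A.Nonempty ∧ c then A.erase (A.min' h.1) else A

lemma erase_min'_sdiff {A₁ A₂ : Finset α} (h₁ : A₁.Nonempty) (h₂ : A₂.Nonempty) :
    (A₁.erase (A₁.min' h₁) \ A₂.erase (A₂.min' h₂)).card ≤ (A₁ \ A₂).card := by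
  set m₁ := A₁.min' h₁ with hm₁def
  set m₂ := A₂.min' h₂ with hm₂def
  rcases lt_trichotomy m₁ m₂ with h | h | h
  · have hm₁ : m₁ ∉ A₂ := fun hc => absurd (A₂.min'_le _ hc) (not_le.2 h)
    have hsub : A₁.erase m₁ \ A₂.erase m₂ ⊆ insert m₂ ((A₁ \ A₂).erase m₁) := by
      intro x hx
      simp only [mem_sdiff, mem_erase, mem_insert] at hx ⊢
      obtain ⟨⟨hxm, hxA⟩, hx2⟩ := hx
      by_cases hxe : x = m₂
      · exact Or.inl hxe
      · exact Or.inr ⟨hxm, hxA, fun hA2 => hx2 ⟨hxe, hA2⟩⟩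
    have h1 : m₁ ∈ A₁ \ A₂ := mem_sdiff.2 ⟨A₁.min'_mem h₁, hm₁⟩
    calc (A₁.erase m₁ \ A₂.erase m₂).card
        ≤ (insert m₂ ((A₁ \ A₂).erase m₁)).card := card_le_card hsub
      _ ≤ ((A₁ \ A₂).erase m₁).card + 1 := card_insert_le _ _
      _ = (A₁ \ A₂).card - 1 + 1 := by rw [card_erase_of_mem h1]
      _ = (A₁ \ A₂).card := Nat.succ_pred_eq_of_pos (card_pos.2 ⟨m₁, h1⟩)
  · apply card_le_card
    intro x hx
    simp only [mem_sdiff, mem_erase] at hx ⊢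
    obtain ⟨⟨hxm, hxA⟩, hx2⟩ := hx
    refine ⟨hxA, fun hA2 => hx2 ⟨by rw [← h] at *; exact hxm, hA2⟩⟩
  · have hm₂ : m₂ ∉ A₁ := fun hc => absurd (A₁.min'_le _ hc) (not_le.2 h)
    apply card_le_card
    intro x hx
    simp only [mem_sdiff, mem_erase] at hx ⊢
    obtain ⟨⟨hxm, hxA⟩, hx2⟩ := hx
    refine ⟨hxA, fun hA2 => hx2 ⟨fun he => hm₂ (he ▸ hxA), hA2⟩⟩

lemma sdiff_erase_card_le {A B : Finset α} (m : α) :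
    (A \ B.erase m).card ≤ (A \ B).card + 1 := by
  have : A \ B.erase m ⊆ insert m (A \ B) := by
    intro x hx
    simp only [mem_sdiff, mem_erase, mem_insert] at hx ⊢
    obtain ⟨hxA, hx2⟩ := hx
    by_cases hxm : x = m
    · exact Or.inl hxm
    · exact Or.inr ⟨hxA, fun hB => hx2 ⟨hxm, hB⟩⟩
  calc (A \ B.erase m).card ≤ (insert m (A \ B)).card := card_le_card this
    _ ≤ (A \ B).card + 1 := card_insert_le _ _

lemma erase_sdiff_card_le {A B : Finset α} (m : α) :
    (A.erase m \ B).card ≤ (A \ B).card :=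
  card_le_card (sdiff_subset_sdiff (erase_subset _ _) Subset.rfl)

/-- one-sided per-bin inequality -/
lemma half (A₁ A₂ : Finset α) (B₁ B₂ : Finset β) :
    (emin A₁ B₁.Nonempty \ emin A₂ B₂.Nonempty).card
      + (emin B₂ A₂.Nonempty \ emin B₁ A₁.Nonempty).card
    ≤ (A₁ \ A₂).card + (B₂ \ B₁).card := by
  simp only [emin]
  by_cases hp₁ : A₁.Nonempty ∧ B₁.Nonempty
  · have hq₁ : B₁.Nonempty ∧ A₁.Nonempty := ⟨hp₁.2, hp₁.1⟩
    by_cases hp₂ : A₂.Nonempty ∧ B₂.Nonempty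
    · have hq₂ : B₂.Nonempty ∧ A₂.Nonempty := ⟨hp₂.2, hp₂.1⟩
      rw [dif_pos hp₁, dif_pos hp₂, dif_pos hq₂, dif_pos hq₁]
      exact Nat.add_le_add (erase_min'_sdiff hp₁.1 hp₂.1) (erase_min'_sdiff hp₂.2 hp₁.2)
    · have hq₂ : ¬ (B₂.Nonempty ∧ A₂.Nonempty) := fun h => hp₂ ⟨h.2, h.1⟩
      rw [dif_pos hp₁, dif_neg hp₂, dif_neg hq₂, dif_pos hq₁]
      rcases not_and_or.mp hp₂ with hA₂ | hB₂
      · have hA₂' : A₂ = ∅ := not_nonempty_iff_eq_empty.mp hA₂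
        subst hA₂'
        have e1 : (A₁.erase (A₁.min' hp₁.1) \ (∅ : Finset α)).card = A₁.card - 1 := by
          rw [sdiff_empty, card_erase_of_mem (A₁.min'_mem hp₁.1)]
        have e2 : (A₁ \ (∅ : Finset α)).card = A₁.card := by rw [sdiff_empty]
        rw [e1, e2]
        have h3 := sdiff_erase_card_le (A := B₂) (B := B₁) (B₁.min' hp₁.2)
        have h4 : 1 ≤ A₁.card := card_pos.2 hp₁.1
        omega
      · have hB₂' : B₂ = ∅ := not_nonempty_iff_eq_empty.mp hB₂
        subst hB₂'
        simp only [empty_sdiff, card_empty, add_zero]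
        exact erase_sdiff_card_le _
  · have hq₁ : ¬ (B₁.Nonempty ∧ A₁.Nonempty) := fun h => hp₁ ⟨h.2, h.1⟩
    by_cases hp₂ : A₂.Nonempty ∧ B₂.Nonempty
    · have hq₂ : B₂.Nonempty ∧ A₂.Nonempty := ⟨hp₂.2, hp₂.1⟩
      rw [dif_neg hp₁, dif_pos hp₂, dif_pos hq₂, dif_neg hq₁]
      rcases not_and_or.mp hp₁ with hA₁ | hB₁
      · have hA₁' : A₁ = ∅ := not_nonempty_iff_eq_empty.mp hA₁
        subst hA₁'
        simp only [empty_sdiff, card_empty, zero_add]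
        exact erase_sdiff_card_le _
      · have hB₁' : B₁ = ∅ := not_nonempty_iff_eq_empty.mp hB₁
        subst hB₁'
        have e1 : (B₂.erase (B₂.min' hp₂.2) \ (∅ : Finset β)).card = B₂.card - 1 := by
          rw [sdiff_empty, card_erase_of_mem (B₂.min'_mem hp₂.2)]
        have e2 : (B₂ \ (∅ : Finset β)).card = B₂.card := by rw [sdiff_empty]
        rw [e1, e2]
        have h3 := sdiff_erase_card_le (A := A₁) (B := A₂) (A₂.min' hp₂.1)
        have h4 : 1 ≤ B₂.card := card_pos.2 hp₂.2
        omega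
    · have hq₂ : ¬ (B₂.Nonempty ∧ A₂.Nonempty) := fun h => hp₂ ⟨h.2, h.1⟩
      rw [dif_neg hp₁, dif_neg hp₂, dif_neg hq₂, dif_neg hq₁]

section
variable {w n k : ℕ} (h₁ : Fin w → Fin k) (h₂ : Fin n → Fin k)
    (W : Finset (Fin w)) (T : Finset (Fin n))

lemma matched_fst {x : Fin w} (hx : x ∈ (binMatch h₁ h₂ W T).image Prod.fst) :
    ∃ hW : (W.filter fun ω => h₁ ω = h₁ x).Nonempty,
      (T.filter fun τ => h₂ τ = h₁ x).Nonempty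
        ∧ x = (W.filter fun ω => h₁ ω = h₁ x).min' hW := by
  simp only [binMatch, mem_image, mem_biUnion, mem_univ, true_and] at hx
  obtain ⟨p, ⟨b, hp⟩, hpx⟩ := hx
  by_cases hW : (W.filter fun ω => h₁ ω = b).Nonempty
  · by_cases hT : (T.filter fun τ => h₂ τ = b).Nonempty
    · rw [dif_pos hW, dif_pos hT, mem_singleton] at hp
      subst hp
      have hb : h₁ x = b := by
        rw [← hpx]; exact (mem_filter.mp (min'_mem _ hW)).2
      subst hb
      exact ⟨hW, hT, hpx.symm⟩
    · rw [dif_pos hW, dif_neg hT] at hp; exact absurd hp (notMem_empty _)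
  · rw [dif_neg hW] at hp; exact absurd hp (notMem_empty _)

lemma fst_matched {x : Fin w} (hW : (W.filter fun ω => h₁ ω = h₁ x).Nonempty)
    (hT : (T.filter fun τ => h₂ τ = h₁ x).Nonempty)
    (hx : x = (W.filter fun ω => h₁ ω = h₁ x).min' hW) :
    x ∈ (binMatch h₁ h₂ W T).image Prod.fst := by
  simp only [binMatch, mem_image, mem_biUnion, mem_univ, true_and]
  exact ⟨((W.filter fun ω => h₁ ω = h₁ x).min' hW,
          (T.filter fun τ => h₂ τ = h₁ x).min' hT),
    ⟨h₁ x, by rw [dif_pos hW, dif_pos hT]; exact mem_singleton_self _⟩, hx.symm⟩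

lemma matched_snd {x : Fin n} (hx : x ∈ (binMatch h₁ h₂ W T).image Prod.snd) :
    ∃ hT : (T.filter fun τ => h₂ τ = h₂ x).Nonempty,
      (W.filter fun ω => h₁ ω = h₂ x).Nonempty
        ∧ x = (T.filter fun τ => h₂ τ = h₂ x).min' hT := by
  simp only [binMatch, mem_image, mem_biUnion, mem_univ, true_and] at hx
  obtain ⟨p, ⟨b, hp⟩, hpx⟩ := hx
  by_cases hW : (W.filter fun ω => h₁ ω = b).Nonempty
  · by_cases hT : (T.filter fun τ => h₂ τ = b).Nonempty
    · rw [dif_pos hW, dif_pos hT, mem_singleton] at hp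
      subst hp
      have hb : h₂ x = b := by
        rw [← hpx]; exact (mem_filter.mp (min'_mem _ hT)).2
      subst hb
      exact ⟨hT, hW, hpx.symm⟩
    · rw [dif_pos hW, dif_neg hT] at hp; exact absurd hp (notMem_empty _)
  · rw [dif_neg hW] at hp; exact absurd hp (notMem_empty _)

lemma snd_matched {x : Fin n} (hT : (T.filter fun τ => h₂ τ = h₂ x).Nonempty)
    (hW : (W.filter fun ω => h₁ ω = h₂ x).Nonempty)
    (hx : x = (T.filter fun τ => h₂ τ = h₂ x).min' hT) :
    x ∈ (binMatch h₁ h₂ W T).image Prod.snd := by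
  simp only [binMatch, mem_image, mem_biUnion, mem_univ, true_and]
  exact ⟨((W.filter fun ω => h₁ ω = h₂ x).min' hW,
          (T.filter fun τ => h₂ τ = h₂ x).min' hT),
    ⟨h₂ x, by rw [dif_pos hW, dif_pos hT]; exact mem_singleton_self _⟩, hx.symm⟩

lemma filter_residue_fst (b : Fin k) :
    ((W \ (binMatch h₁ h₂ W T).image Prod.fst).filter fun ω => h₁ ω = b)
      = emin (W.filter fun ω => h₁ ω = b) (T.filter fun τ => h₂ τ = b).Nonempty := by
  rw [emin]
  by_cases hc : (W.filter fun ω => h₁ ω = b).Nonempty ∧ (T.filter fun τ => h₂ τ = b).Nonempty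
  · rw [dif_pos hc]
    ext x
    simp only [mem_filter, mem_sdiff, mem_erase]
    constructor
    · rintro ⟨⟨hxW, hnot⟩, hxb⟩
      refine ⟨?_, hxW, hxb⟩
      intro hmin
      apply hnot
      apply fst_matched h₁ h₂ W T (by rw [hxb]; exact hc.1) (by rw [hxb]; exact hc.2)
      simp only [hxb]
      exact hmin
    · rintro ⟨hmin, hxW, hxb⟩
      refine ⟨⟨hxW, ?_⟩, hxb⟩
      intro hmem
      obtain ⟨hW', hT', hx'⟩ := matched_fst h₁ h₂ W T hmem
      apply hmin
      rw [hx']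
      congr 1 <;> rw [hxb]
  · rw [dif_neg hc]
    ext x
    simp only [mem_filter, mem_sdiff]
    constructor
    · rintro ⟨⟨hxW, _⟩, hxb⟩
      exact ⟨hxW, hxb⟩
    · rintro ⟨hxW, hxb⟩
      refine ⟨⟨hxW, ?_⟩, hxb⟩
      intro hmem
      obtain ⟨hW', hT', _⟩ := matched_fst h₁ h₂ W T hmem
      rw [hxb] at hW' hT'
      exact hc ⟨hW', hT'⟩

lemma filter_residue_snd (b : Fin k) :
    ((T \ (binMatch h₁ h₂ W T).image Prod.snd).filter fun τ => h₂ τ = b)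
      = emin (T.filter fun τ => h₂ τ = b) (W.filter fun ω => h₁ ω = b).Nonempty := by
  rw [emin]
  by_cases hc : (T.filter fun τ => h₂ τ = b).Nonempty ∧ (W.filter fun ω => h₁ ω = b).Nonempty
  · rw [dif_pos hc]
    ext x
    simp only [mem_filter, mem_sdiff, mem_erase]
    constructor
    · rintro ⟨⟨hxT, hnot⟩, hxb⟩
      refine ⟨?_, hxT, hxb⟩
      intro hmin
      apply hnot
      apply snd_matched h₁ h₂ W T (by rw [hxb]; exact hc.1) (by rw [hxb]; exact hc.2)
      simp only [hxb]
      exact hmin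
    · rintro ⟨hmin, hxT, hxb⟩
      refine ⟨⟨hxT, ?_⟩, hxb⟩
      intro hmem
      obtain ⟨hT', hW', hx'⟩ := matched_snd h₁ h₂ W T hmem
      apply hmin
      rw [hx']
      congr 1 <;> rw [hxb]
  · rw [dif_neg hc]
    ext x
    simp only [mem_filter, mem_sdiff]
    constructor
    · rintro ⟨⟨hxT, _⟩, hxb⟩
      exact ⟨hxT, hxb⟩
    · rintro ⟨hxT, hxb⟩
      refine ⟨⟨hxT, ?_⟩, hxb⟩
      intro hmem
      obtain ⟨hT', hW', _⟩ := matched_snd h₁ h₂ W T hmem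
      rw [hxb] at hW' hT'
      exact hc ⟨hT', hW'⟩

end

lemma filter_sdiff' {γ : Type*} [DecidableEq γ] (X Y : Finset γ) (p : γ → Prop)
    [DecidablePred p] : (X \ Y).filter p = X.filter p \ Y.filter p := by
  ext x; simp only [mem_filter, mem_sdiff]; tauto

/-- the difference-score of the residues of the `k`-bin hash is at most the
difference-score of the inputs; in particular the `k`-bin hash is composition-friendly
(unit-distance inputs yield unit-distance outputs). -/
theorem binMatch_composition_friendly {w n k : ℕ} (h₁ : Fin w → Fin k) (h₂ : Fin n → Fin k)
    (W₁ W₂ : Finset (Fin w)) (T₁ T₂ : Finset (Fin n)) :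
    diffScore (binResidue h₁ h₂ W₁ T₁) (binResidue h₁ h₂ W₂ T₂)
      ≤ diffScore (W₁, T₁) (W₂, T₂) ∧
    (diffScore (W₁, T₁) (W₂, T₂) ≤ 2 →
      diffScore (binResidue h₁ h₂ W₁ T₁) (binResidue h₁ h₂ W₂ T₂) ≤ 2) := by
  have key : ∀ b : Fin k,
      (((W₁ \ (binMatch h₁ h₂ W₁ T₁).image Prod.fst)
          \ (W₂ \ (binMatch h₁ h₂ W₂ T₂).image Prod.fst)).filter fun ω => h₁ ω = b).card
        + (((W₂ \ (binMatch h₁ h₂ W₂ T₂).image Prod.fst)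
          \ (W₁ \ (binMatch h₁ h₂ W₁ T₁).image Prod.fst)).filter fun ω => h₁ ω = b).card
        + (((T₁ \ (binMatch h₁ h₂ W₁ T₁).image Prod.snd)
          \ (T₂ \ (binMatch h₁ h₂ W₂ T₂).image Prod.snd)).filter fun τ => h₂ τ = b).card
        + (((T₂ \ (binMatch h₁ h₂ W₂ T₂).image Prod.snd)
          \ (T₁ \ (binMatch h₁ h₂ W₁ T₁).image Prod.snd)).filter fun τ => h₂ τ = b).card
      ≤ ((W₁ \ W₂).filter fun ω => h₁ ω = b).card
        + ((W₂ \ W₁).filter fun ω => h₁ ω = b).card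
        + ((T₁ \ T₂).filter fun τ => h₂ τ = b).card
        + ((T₂ \ T₁).filter fun τ => h₂ τ = b).card := by
    intro b
    rw [filter_sdiff' (W₁ \ (binMatch h₁ h₂ W₁ T₁).image Prod.fst)
          (W₂ \ (binMatch h₁ h₂ W₂ T₂).image Prod.fst),
        filter_sdiff' (W₂ \ (binMatch h₁ h₂ W₂ T₂).image Prod.fst)
          (W₁ \ (binMatch h₁ h₂ W₁ T₁).image Prod.fst),
        filter_sdiff' (T₁ \ (binMatch h₁ h₂ W₁ T₁).image Prod.snd)
          (T₂ \ (binMatch h₁ h₂ W₂ T₂).image Prod.snd),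
        filter_sdiff' (T₂ \ (binMatch h₁ h₂ W₂ T₂).image Prod.snd)
          (T₁ \ (binMatch h₁ h₂ W₁ T₁).image Prod.snd),
        filter_sdiff' W₁ W₂, filter_sdiff' W₂ W₁, filter_sdiff' T₁ T₂, filter_sdiff' T₂ T₁,
        filter_residue_fst h₁ h₂ W₁ T₁ b, filter_residue_fst h₁ h₂ W₂ T₂ b,
        filter_residue_snd h₁ h₂ W₁ T₁ b, filter_residue_snd h₁ h₂ W₂ T₂ b]
    have ha := half (W₁.filter fun ω => h₁ ω = b) (W₂.filter fun ω => h₁ ω = b)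
      (T₁.filter fun τ => h₂ τ = b) (T₂.filter fun τ => h₂ τ = b)
    have hb := half (W₂.filter fun ω => h₁ ω = b) (W₁.filter fun ω => h₁ ω = b)
      (T₂.filter fun τ => h₂ τ = b) (T₁.filter fun τ => h₂ τ = b)
    omega
  have main : diffScore (binResidue h₁ h₂ W₁ T₁) (binResidue h₁ h₂ W₂ T₂)
      ≤ diffScore (W₁, T₁) (W₂, T₂) := by
    simp only [diffScore, binResidue]
    rw [card_eq_sum_card_fiberwise (f := h₁) (t := Finset.univ) (fun x _ => mem_univ _),
        card_eq_sum_card_fiberwise (f := h₁) (t := Finset.univ) (fun x _ => mem_univ _),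
        card_eq_sum_card_fiberwise (f := h₂) (t := Finset.univ) (fun x _ => mem_univ _),
        card_eq_sum_card_fiberwise (f := h₂) (t := Finset.univ) (fun x _ => mem_univ _),
        card_eq_sum_card_fiberwise (f := h₁) (t := Finset.univ) (fun x _ => mem_univ _),
        card_eq_sum_card_fiberwise (f := h₁) (t := Finset.univ) (fun x _ => mem_univ _),
        card_eq_sum_card_fiberwise (f := h₂) (t := Finset.univ) (fun x _ => mem_univ _),
        card_eq_sum_card_fiberwise (f := h₂) (t := Finset.univ) (fun x _ => mem_univ _),
        ← sum_add_distrib, ← sum_add_distrib, ← sum_add_distrib,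
        ← sum_add_distrib, ← sum_add_distrib, ← sum_add_distrib]
    exact sum_le_sum fun b _ => key b
  exact ⟨main, fun h => le_trans main h⟩
end

section
/- In the special case where $W_2 = W_1 \cup \{\omega\}$ for a single new worker $\omega \notin W_1$ and $T_2 = T_1$, the outputs $(W_1', T_1')$ and $(W_2', T_2')$ of the $k$-bin hash satisfy exactly one of: (a) $W_2' = W_1' \cup \{\omega\}$ and $T_2' = T_1'$; (b) $W_2' = W_1'$ and $T_2' = T_1' \setminus \{\tau\}$ for some task $\tau \in T_1'$; or (c) $W_2' = W_1' \cup \{\gamma\}$ for some worker $\gamma \in W_1 \setminus W_1'$ with $\gamma$ in the same bin as $\omega$, and $T_2' = T_1'$. In all cases the difference-score of the outputs is exactly 1. -/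
open Finset

section helpers
variable {α : Type*} [DecidableEq α]

lemma sdiff_insert_key {W M₁ M₂ : Finset α} {a : α} (ha : a ∉ W) (haM : a ∉ M₂)
    (key : ∀ x ∈ W, (x ∈ M₂ ↔ x ∈ M₁)) : insert a W \ M₂ = insert a (W \ M₁) := by
  ext x
  simp only [mem_sdiff, mem_insert]
  constructor
  · rintro ⟨rfl | hxW, hnm⟩
    · exact Or.inl rfl
    · exact Or.inr ⟨hxW, fun h => hnm ((key x hxW).mpr h)⟩
  · rintro (rfl | ⟨hxW, hnm⟩)
    · exact ⟨Or.inl rfl, haM⟩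
    · exact ⟨Or.inr hxW, fun h => hnm ((key x hxW).mp h)⟩

lemma sdiff_matched_key {W M₁ M₂ : Finset α} {a : α} (ha : a ∉ W) (haM : a ∈ M₂)
    (key : ∀ x ∈ W, (x ∈ M₂ ↔ x ∈ M₁)) : insert a W \ M₂ = W \ M₁ := by
  ext x
  simp only [mem_sdiff, mem_insert]
  constructor
  · rintro ⟨rfl | hxW, hnm⟩
    · exact absurd haM hnm
    · exact ⟨hxW, fun h => hnm ((key x hxW).mpr h)⟩
  · rintro ⟨hxW, hnm⟩
    exact ⟨Or.inr hxW, fun h => hnm ((key x hxW).mp h)⟩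

lemma sdiff_swap_key {W M₁ M₂ : Finset α} {a γ : α} (ha : a ∉ W) (haM : a ∈ M₂)
    (hγW : γ ∈ W) (hγ₂ : γ ∉ M₂) (hγ₁ : γ ∈ M₁)
    (key : ∀ x ∈ W, x ≠ γ → (x ∈ M₂ ↔ x ∈ M₁)) :
    insert a W \ M₂ = insert γ (W \ M₁) := by
  ext x
  simp only [mem_sdiff, mem_insert]
  constructor
  · rintro ⟨rfl | hxW, hnm⟩
    · exact absurd haM hnm
    · by_cases hxγ : x = γ
      · exact Or.inl hxγ
      · exact Or.inr ⟨hxW, fun h => hnm ((key x hxW hxγ).mpr h)⟩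
  · rintro (rfl | ⟨hxW, hnm⟩)
    · exact ⟨Or.inr hγW, hγ₂⟩
    · have hxγ : x ≠ γ := fun h => hnm (h ▸ hγ₁)
      exact ⟨Or.inr hxW, fun h => hnm ((key x hxW hxγ).mp h)⟩

lemma sdiff_erase_key {T N₁ N₂ : Finset α} {τ : α} (_hτT : τ ∈ T) (_hτ₁ : τ ∉ N₁) (hτ₂ : τ ∈ N₂)
    (key : ∀ t ∈ T, t ≠ τ → (t ∈ N₂ ↔ t ∈ N₁)) : T \ N₂ = (T \ N₁).erase τ := by
  ext t
  simp only [mem_sdiff, mem_erase]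
  constructor
  · rintro ⟨htT, hnm⟩
    have htτ : t ≠ τ := fun h => hnm (h ▸ hτ₂)
    exact ⟨htτ, htT, fun h => hnm ((key t htT htτ).mpr h)⟩
  · rintro ⟨htτ, htT, hnm⟩
    exact ⟨htT, fun h => hnm ((key t htT htτ).mp h)⟩

lemma score_one {β : Type*} [DecidableEq β] {A₁ A₂ : Finset α} {B₁ B₂ : Finset β}
    (h : (∃ a ∉ A₁, A₂ = insert a A₁ ∧ B₂ = B₁) ∨
      (A₂ = A₁ ∧ ∃ τ ∈ B₁, B₂ = B₁.erase τ)) :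
    (A₁ \ A₂).card + (A₂ \ A₁).card + (B₁ \ B₂).card + (B₂ \ B₁).card = 1 := by
  rcases h with ⟨a, ha, rfl, rfl⟩ | ⟨rfl, τ, hτ, rfl⟩
  · rw [Finset.insert_sdiff_cancel ha,
      Finset.sdiff_eq_empty_iff_subset.mpr (Finset.subset_insert a A₁)]
    simp
  · rw [Finset.sdiff_erase_self hτ,
      Finset.sdiff_eq_empty_iff_subset.mpr (Finset.erase_subset τ B₁)]
    simp

end helpers

lemma matched_fst_iff {w n k : ℕ} (h₁ : Fin w → Fin k) (h₂ : Fin n → Fin k)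
    (W : Finset (Fin w)) (T : Finset (Fin n)) (x : Fin w) :
    x ∈ (binMatch h₁ h₂ W T).image Prod.fst ↔
      x ∈ W ∧ (∀ y ∈ W, h₁ y = h₁ x → x ≤ y) ∧
        (T.filter fun τ => h₂ τ = h₁ x).Nonempty := by
  simp only [mem_image, binMatch, mem_biUnion, mem_univ, true_and]
  constructor
  · rintro ⟨p, ⟨b, hb⟩, rfl⟩
    split_ifs at hb with hW hT
    · simp only [mem_singleton] at hb
      subst hb
      have hm := Finset.min'_mem _ hW
      simp only [mem_filter] at hm
      refine ⟨hm.1, fun y hy hxy => ?_, ?_⟩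
      · exact Finset.min'_le _ y (by simp [mem_filter, hy, hxy, hm.2])
      · rw [hm.2]; exact hT
    · simp at hb
    · simp at hb
  · rintro ⟨hxW, hmin, hT⟩
    have hW : (W.filter fun a => h₁ a = h₁ x).Nonempty := ⟨x, by simp [hxW]⟩
    refine ⟨((W.filter fun a => h₁ a = h₁ x).min' hW, (T.filter fun τ => h₂ τ = h₁ x).min' hT),
      ⟨h₁ x, ?_⟩, ?_⟩
    · rw [dif_pos hW, dif_pos hT]; simp
    · have h1 : (W.filter fun a => h₁ a = h₁ x).min' hW ≤ x := Finset.min'_le _ _ (by simp [hxW])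
      have h2 : x ≤ (W.filter fun a => h₁ a = h₁ x).min' hW := by
        have hm := Finset.min'_mem _ hW
        simp only [mem_filter] at hm
        exact hmin _ hm.1 hm.2
      exact le_antisymm h1 h2

lemma matched_snd_iff {w n k : ℕ} (h₁ : Fin w → Fin k) (h₂ : Fin n → Fin k)
    (W : Finset (Fin w)) (T : Finset (Fin n)) (τ : Fin n) :
    τ ∈ (binMatch h₁ h₂ W T).image Prod.snd ↔
      (W.filter fun a => h₁ a = h₂ τ).Nonempty ∧ τ ∈ T ∧
        ∀ t ∈ T, h₂ t = h₂ τ → τ ≤ t := by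
  simp only [mem_image, binMatch, mem_biUnion, mem_univ, true_and]
  constructor
  · rintro ⟨p, ⟨b, hb⟩, rfl⟩
    split_ifs at hb with hW hT
    · simp only [mem_singleton] at hb
      subst hb
      have hm := Finset.min'_mem _ hT
      simp only [mem_filter] at hm
      rw [hm.2]
      exact ⟨hW, hm.1, fun t ht hty =>
        Finset.min'_le _ t (by simp [mem_filter, ht, hty, hm.2])⟩
    · simp at hb
    · simp at hb
  · rintro ⟨hW, hτT, hmin⟩
    have hT : (T.filter fun t => h₂ t = h₂ τ).Nonempty := ⟨τ, by simp [hτT]⟩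
    refine ⟨((W.filter fun a => h₁ a = h₂ τ).min' hW, (T.filter fun t => h₂ t = h₂ τ).min' hT),
      ⟨h₂ τ, ?_⟩, ?_⟩
    · rw [dif_pos hW, dif_pos hT]; simp
    · have h1 : (T.filter fun t => h₂ t = h₂ τ).min' hT ≤ τ := Finset.min'_le _ _ (by simp [hτT])
      have h2 : τ ≤ (T.filter fun t => h₂ t = h₂ τ).min' hT := by
        have hm := Finset.min'_mem _ hT
        simp only [mem_filter] at hm
        exact hmin _ hm.1 hm.2
      exact le_antisymm h1 h2

lemma matched_fst_mono {w n k : ℕ} (h₁ : Fin w → Fin k) (h₂ : Fin n → Fin k)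
    (W₁ : Finset (Fin w)) (T₁ : Finset (Fin n)) (ω : Fin w) {x : Fin w} (hxW : x ∈ W₁) :
    x ∈ (binMatch h₁ h₂ (insert ω W₁) T₁).image Prod.fst →
      x ∈ (binMatch h₁ h₂ W₁ T₁).image Prod.fst := by
  rw [matched_fst_iff, matched_fst_iff]
  rintro ⟨-, hall, hT⟩
  exact ⟨hxW, fun y hy => hall y (mem_insert_of_mem hy), hT⟩

lemma matched_fst_up {w n k : ℕ} (h₁ : Fin w → Fin k) (h₂ : Fin n → Fin k)
    (W₁ : Finset (Fin w)) (T₁ : Finset (Fin n)) (ω : Fin w) {x : Fin w} (hxW : x ∈ W₁)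
    (hcmp : x ∈ (binMatch h₁ h₂ W₁ T₁).image Prod.fst → h₁ x = h₁ ω → x ≤ ω) :
    x ∈ (binMatch h₁ h₂ W₁ T₁).image Prod.fst →
      x ∈ (binMatch h₁ h₂ (insert ω W₁) T₁).image Prod.fst := by
  intro hm
  have hc := hcmp hm
  rw [matched_fst_iff] at hm ⊢
  obtain ⟨-, hall, hT⟩ := hm
  refine ⟨mem_insert_of_mem hxW, ?_, hT⟩
  intro y hy hyx
  rcases mem_insert.mp hy with rfl | hyW
  · exact hc hyx.symm
  · exact hall y hyW hyx

lemma snd_residue_eq {w n k : ℕ} (h₁ : Fin w → Fin k) (h₂ : Fin n → Fin k)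
    (W₁ : Finset (Fin w)) (T₁ : Finset (Fin n)) (ω : Fin w)
    (hcond : ∀ τ ∈ T₁, h₂ τ = h₁ ω → (W₁.filter fun a => h₁ a = h₂ τ).Nonempty) :
    T₁ \ (binMatch h₁ h₂ (insert ω W₁) T₁).image Prod.snd =
      T₁ \ (binMatch h₁ h₂ W₁ T₁).image Prod.snd := by
  ext τ
  simp only [mem_sdiff, matched_snd_iff]
  refine and_congr_right fun hτ => not_congr (and_congr_left fun _ => ?_)
  rw [filter_insert]
  split_ifs with h
  · exact iff_of_true (insert_nonempty _ _) (hcond τ hτ h.symm)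
  · rfl

/-- if `W₂ = W₁ ∪ {ω}` for a single new worker `ω ∉ W₁` and `T₂ = T₁`, then the
residues `(W₁', T₁')` and `(W₂', T₂')` of the `k`-bin hash satisfy one of:
(a) `W₂' = W₁' ∪ {ω}` and `T₂' = T₁'`;
(b) `W₂' = W₁'` and `T₂' = T₁' \ {τ}` for some task `τ ∈ T₁'`;
(c) `W₂' = W₁' ∪ {γ}` for some `γ ∈ W₁ \ W₁'` in the same bin as `ω`, and `T₂' = T₁'`;
and in all cases the difference-score of the two residues is exactly `1`. -/
theorem binMatch_one_new_worker {w n k : ℕ} (h₁ : Fin w → Fin k) (h₂ : Fin n → Fin k)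
    (W₁ : Finset (Fin w)) (T₁ : Finset (Fin n)) (ω : Fin w) (hω : ω ∉ W₁) :
    (((binResidue h₁ h₂ (insert ω W₁) T₁).1 = insert ω (binResidue h₁ h₂ W₁ T₁).1 ∧
        (binResidue h₁ h₂ (insert ω W₁) T₁).2 = (binResidue h₁ h₂ W₁ T₁).2) ∨
      ((binResidue h₁ h₂ (insert ω W₁) T₁).1 = (binResidue h₁ h₂ W₁ T₁).1 ∧
        ∃ τ ∈ (binResidue h₁ h₂ W₁ T₁).2,
          (binResidue h₁ h₂ (insert ω W₁) T₁).2 = ((binResidue h₁ h₂ W₁ T₁).2).erase τ) ∨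
      (∃ γ ∈ W₁, γ ∉ (binResidue h₁ h₂ W₁ T₁).1 ∧ h₁ γ = h₁ ω ∧
        (binResidue h₁ h₂ (insert ω W₁) T₁).1 = insert γ (binResidue h₁ h₂ W₁ T₁).1 ∧
        (binResidue h₁ h₂ (insert ω W₁) T₁).2 = (binResidue h₁ h₂ W₁ T₁).2)) ∧
    (((binResidue h₁ h₂ W₁ T₁).1 \ (binResidue h₁ h₂ (insert ω W₁) T₁).1).card +
        ((binResidue h₁ h₂ (insert ω W₁) T₁).1 \ (binResidue h₁ h₂ W₁ T₁).1).card +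
        ((binResidue h₁ h₂ W₁ T₁).2 \ (binResidue h₁ h₂ (insert ω W₁) T₁).2).card +
        ((binResidue h₁ h₂ (insert ω W₁) T₁).2 \ (binResidue h₁ h₂ W₁ T₁).2).card = 1) := by
  have hsub : (binResidue h₁ h₂ W₁ T₁).1 ⊆ W₁ := Finset.sdiff_subset
  by_cases hTb : (T₁.filter fun τ => h₂ τ = h₁ ω).Nonempty
  · by_cases hWb : (W₁.filter fun a => h₁ a = h₁ ω).Nonempty
    · -- case 3 : both the worker bin and task bin of ω are nonempty in (W₁, T₁)
      set γ := (W₁.filter fun a => h₁ a = h₁ ω).min' hWb with hγdef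
      have hγmem := Finset.min'_mem _ hWb
      rw [mem_filter] at hγmem
      obtain ⟨hγW, hγb⟩ := hγmem
      have hγne : γ ≠ ω := fun h => hω (h ▸ hγW)
      have hsnd : (binResidue h₁ h₂ (insert ω W₁) T₁).2 = (binResidue h₁ h₂ W₁ T₁).2 :=
        snd_residue_eq h₁ h₂ W₁ T₁ ω (fun τ hτ hτb => by rw [hτb]; exact hWb)
      have hγm₁ : γ ∈ (binMatch h₁ h₂ W₁ T₁).image Prod.fst := by
        rw [matched_fst_iff]
        refine ⟨hγW, ?_, ?_⟩
        · intro y hy hyb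
          exact Finset.min'_le _ y (mem_filter.mpr ⟨hy, by rw [hyb, hγb]⟩)
        · rw [hγb]; exact hTb
      rcases le_or_gt γ ω with hle | hlt
      · -- case 3a : the old minimum worker γ is still the minimum: disjunct (a)
        have hωun : ω ∉ (binMatch h₁ h₂ (insert ω W₁) T₁).image Prod.fst := by
          rw [matched_fst_iff]
          rintro ⟨-, hall, -⟩
          exact hγne (le_antisymm hle (hall γ (mem_insert_of_mem hγW) hγb))
        have key : ∀ x ∈ W₁, (x ∈ (binMatch h₁ h₂ (insert ω W₁) T₁).image Prod.fst ↔
            x ∈ (binMatch h₁ h₂ W₁ T₁).image Prod.fst) := by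
          intro x hxW
          refine ⟨matched_fst_mono h₁ h₂ W₁ T₁ ω hxW, matched_fst_up h₁ h₂ W₁ T₁ ω hxW ?_⟩
          intro hm hxb
          rw [matched_fst_iff] at hm
          exact le_trans (hm.2.1 γ hγW (by rw [hγb, hxb])) hle
        have hfst : (binResidue h₁ h₂ (insert ω W₁) T₁).1 =
            insert ω (binResidue h₁ h₂ W₁ T₁).1 := sdiff_insert_key hω hωun key
        exact ⟨Or.inl ⟨hfst, hsnd⟩, score_one (Or.inl ⟨ω, fun h => hω (hsub h), hfst, hsnd⟩)⟩
      · -- case 3b : ω becomes the new minimum and γ is freed: disjunct (c)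
        have hωm₂ : ω ∈ (binMatch h₁ h₂ (insert ω W₁) T₁).image Prod.fst := by
          rw [matched_fst_iff]
          refine ⟨mem_insert_self ω _, ?_, hTb⟩
          intro y hy hyb
          rcases mem_insert.mp hy with rfl | hyW
          · exact le_refl _
          · exact le_of_lt (lt_of_lt_of_le hlt (Finset.min'_le _ y (mem_filter.mpr ⟨hyW, hyb⟩)))
        have hγun₂ : γ ∉ (binMatch h₁ h₂ (insert ω W₁) T₁).image Prod.fst := by
          rw [matched_fst_iff]
          rintro ⟨-, hall, -⟩
          exact absurd (hall ω (mem_insert_self ω _) hγb.symm) (not_le.mpr hlt)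
        have key : ∀ x ∈ W₁, x ≠ γ →
            (x ∈ (binMatch h₁ h₂ (insert ω W₁) T₁).image Prod.fst ↔
              x ∈ (binMatch h₁ h₂ W₁ T₁).image Prod.fst) := by
          intro x hxW hxγ
          refine ⟨matched_fst_mono h₁ h₂ W₁ T₁ ω hxW, matched_fst_up h₁ h₂ W₁ T₁ ω hxW ?_⟩
          intro hm hxb
          rw [matched_fst_iff] at hm
          have h1 : x ≤ γ := hm.2.1 γ hγW (by rw [hγb, hxb])
          have h2 : γ ≤ x := Finset.min'_le _ x (mem_filter.mpr ⟨hxW, hxb⟩)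
          exact absurd (le_antisymm h1 h2) hxγ
        have hγR : γ ∉ (binResidue h₁ h₂ W₁ T₁).1 := fun h => (mem_sdiff.mp h).2 hγm₁
        have hfst : (binResidue h₁ h₂ (insert ω W₁) T₁).1 =
            insert γ (binResidue h₁ h₂ W₁ T₁).1 :=
          sdiff_swap_key hω hωm₂ hγW hγun₂ hγm₁ key
        exact ⟨Or.inr (Or.inr ⟨γ, hγW, hγR, hγb, hfst, hsnd⟩),
          score_one (Or.inl ⟨γ, hγR, hfst, hsnd⟩)⟩
    · -- case 2 : ω's worker bin was empty but its task bin is nonempty: disjunct (b)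
      set τ₀ := (T₁.filter fun τ => h₂ τ = h₁ ω).min' hTb with hτ₀def
      have hτ₀mem := Finset.min'_mem _ hTb
      rw [mem_filter] at hτ₀mem
      obtain ⟨hτ₀T, hτ₀b⟩ := hτ₀mem
      have hωm₂ : ω ∈ (binMatch h₁ h₂ (insert ω W₁) T₁).image Prod.fst := by
        rw [matched_fst_iff]
        refine ⟨mem_insert_self ω _, ?_, hTb⟩
        intro y hy hyb
        rcases mem_insert.mp hy with rfl | hyW
        · exact le_refl _
        · exact absurd ⟨y, mem_filter.mpr ⟨hyW, hyb⟩⟩ hWb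
      have key : ∀ x ∈ W₁, (x ∈ (binMatch h₁ h₂ (insert ω W₁) T₁).image Prod.fst ↔
          x ∈ (binMatch h₁ h₂ W₁ T₁).image Prod.fst) := by
        intro x hxW
        refine ⟨matched_fst_mono h₁ h₂ W₁ T₁ ω hxW, matched_fst_up h₁ h₂ W₁ T₁ ω hxW ?_⟩
        intro _ hxb
        exact absurd ⟨x, mem_filter.mpr ⟨hxW, hxb⟩⟩ hWb
      have hfst : (binResidue h₁ h₂ (insert ω W₁) T₁).1 = (binResidue h₁ h₂ W₁ T₁).1 :=
        sdiff_matched_key hω hωm₂ key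
      have hτ₀un₁ : τ₀ ∉ (binMatch h₁ h₂ W₁ T₁).image Prod.snd := by
        rw [matched_snd_iff]
        rintro ⟨hne, -, -⟩
        rw [hτ₀b] at hne
        exact hWb hne
      have hτ₀m₂ : τ₀ ∈ (binMatch h₁ h₂ (insert ω W₁) T₁).image Prod.snd := by
        rw [matched_snd_iff]
        refine ⟨⟨ω, mem_filter.mpr ⟨mem_insert_self ω _, hτ₀b.symm⟩⟩, hτ₀T, ?_⟩
        intro t ht htb
        exact Finset.min'_le _ t (mem_filter.mpr ⟨ht, by rw [htb, hτ₀b]⟩)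
      have keysnd : ∀ t ∈ T₁, t ≠ τ₀ →
          (t ∈ (binMatch h₁ h₂ (insert ω W₁) T₁).image Prod.snd ↔
            t ∈ (binMatch h₁ h₂ W₁ T₁).image Prod.snd) := by
        intro t htT htτ
        rw [matched_snd_iff, matched_snd_iff]
        by_cases htb : h₂ t = h₁ ω
        · constructor
          · rintro ⟨-, -, hall⟩
            have h1 : t ≤ τ₀ := hall τ₀ hτ₀T (by rw [hτ₀b, htb])
            have h2 : τ₀ ≤ t := Finset.min'_le _ t (mem_filter.mpr ⟨htT, htb⟩)
            exact absurd (le_antisymm h1 h2) htτ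
          · rintro ⟨hne, -, -⟩
            rw [htb] at hne
            exact absurd hne hWb
        · rw [filter_insert, if_neg (fun h => htb h.symm)]
      have hsnd : (binResidue h₁ h₂ (insert ω W₁) T₁).2 =
          ((binResidue h₁ h₂ W₁ T₁).2).erase τ₀ :=
        sdiff_erase_key hτ₀T hτ₀un₁ hτ₀m₂ keysnd
      have hτ₀R : τ₀ ∈ (binResidue h₁ h₂ W₁ T₁).2 := mem_sdiff.mpr ⟨hτ₀T, hτ₀un₁⟩
      exact ⟨Or.inr (Or.inl ⟨hfst, τ₀, hτ₀R, hsnd⟩),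
        score_one (Or.inr ⟨hfst, τ₀, hτ₀R, hsnd⟩)⟩
  · -- case 1 : ω's task bin is empty, so ω is simply unmatched: disjunct (a)
    have hωun : ω ∉ (binMatch h₁ h₂ (insert ω W₁) T₁).image Prod.fst := by
      rw [matched_fst_iff]
      rintro ⟨-, -, hT⟩
      exact hTb hT
    have key : ∀ x ∈ W₁, (x ∈ (binMatch h₁ h₂ (insert ω W₁) T₁).image Prod.fst ↔
        x ∈ (binMatch h₁ h₂ W₁ T₁).image Prod.fst) := by
      intro x hxW
      refine ⟨matched_fst_mono h₁ h₂ W₁ T₁ ω hxW, matched_fst_up h₁ h₂ W₁ T₁ ω hxW ?_⟩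
      intro hm hxb
      rw [matched_fst_iff, hxb] at hm
      exact absurd hm.2.2 hTb
    have hfst : (binResidue h₁ h₂ (insert ω W₁) T₁).1 =
        insert ω (binResidue h₁ h₂ W₁ T₁).1 := sdiff_insert_key hω hωun key
    have hsnd : (binResidue h₁ h₂ (insert ω W₁) T₁).2 = (binResidue h₁ h₂ W₁ T₁).2 :=
      snd_residue_eq h₁ h₂ W₁ T₁ ω
        (fun τ hτ hτb => absurd ⟨τ, mem_filter.mpr ⟨hτ, hτb⟩⟩ hTb)
    exact ⟨Or.inl ⟨hfst, hsnd⟩, score_one (Or.inl ⟨ω, fun h => hω (hsub h), hfst, hsnd⟩)⟩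
end

section
/- Suppose partial-assignment algorithms $\psi_1, \dots, \psi_k$ are all composition-friendly, and each $\psi_i$ is $s_i$-switching-cost bounded. Then the composition $\psi_1 \circ \psi_2 \circ \cdots \circ \psi_k$ (applying $\psi_1$ first, feeding its unmatched residue to $\psi_2$, etc.) is composition-friendly and is $(\sum_i s_i)$-switching-cost bounded. -/
open Finset

variable {α β : Type} [DecidableEq α] [DecidableEq β]

/-- A partial-assignment algorithm, viewed through the set of worker/task assignments
(a matching between a subset of `W` and a subset of `T`) that it makes on each input. -/
abbrev PartialAlg (α β : Type) := Finset α → Finset β → Finset (α × β)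

/-- The worker/task output of `ψ` on input `(W, T)`: the unmatched workers and tasks. -/
def residue (ψ : PartialAlg α β) [DecidableEq α] [DecidableEq β]
    (W : Finset α) (T : Finset β) : Finset α × Finset β :=
  (W \ (ψ W T).image Prod.fst, T \ (ψ W T).image Prod.snd)

/-- Two worker/task inputs are unit distance if their difference-score is at most 2. -/
def UnitDist (I₁ I₂ : Finset α × Finset β) : Prop :=
  (I₁.1 \ I₂.1).card + (I₂.1 \ I₁.1).card + (I₁.2 \ I₂.2).card + (I₂.2 \ I₁.2).card ≤ 2

/-- `ψ` is composition-friendly: unit-distance inputs yield unit-distance outputs. -/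
def CompFriendly (ψ : PartialAlg α β) [DecidableEq α] [DecidableEq β] : Prop :=
  ∀ I₁ I₂ : Finset α × Finset β, UnitDist I₁ I₂ →
    UnitDist (residue ψ I₁.1 I₁.2) (residue ψ I₂.1 I₂.2)

/-- `ψ` is `s`-switching-cost bounded: on unit-distance inputs, the sets of assignments made
differ in at most `s` assignments. -/
def CostBounded (ψ : PartialAlg α β) (s : ℕ) : Prop :=
  ∀ I₁ I₂ : Finset α × Finset β, UnitDist I₁ I₂ →
    ((ψ I₁.1 I₁.2) \ (ψ I₂.1 I₂.2)).card + ((ψ I₂.1 I₂.2) \ (ψ I₁.1 I₁.2)).card ≤ s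

/-- The composition of a list of partial-assignment algorithms: apply the first algorithm,
feed its unmatched residue to the rest, and take the union of all assignments made. -/
def compose [DecidableEq α] [DecidableEq β] : List (PartialAlg α β) → PartialAlg α β
  | [] => fun _ _ => ∅
  | ψ :: rest => fun W T =>
      ψ W T ∪ compose rest (residue ψ W T).1 (residue ψ W T).2

/-- if `ψ₁, …, ψₖ` are composition-friendly partial-assignment algorithms and
each `ψᵢ` is `sᵢ`-switching-cost bounded, then `ψ₁ ∘ ⋯ ∘ ψₖ` is composition-friendly and
`(∑ᵢ sᵢ)`-switching-cost bounded. -/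
theorem compose_friendly_and_cost_bounded
    (l : List (PartialAlg α β)) (s : List ℕ) (hlen : l.length = s.length)
    (hval : ∀ ψ ∈ l, ∀ (W : Finset α) (T : Finset β), ∀ p ∈ ψ W T, p.1 ∈ W ∧ p.2 ∈ T)
    (hfriendly : ∀ ψ ∈ l, CompFriendly ψ)
    (hcost : ∀ i : ℕ, (h : i < l.length) →
      CostBounded (l.get ⟨i, h⟩) (s.get ⟨i, hlen ▸ h⟩)) :
    CompFriendly (compose l) ∧ CostBounded (compose l) s.sum := by
  clear hval
  induction l generalizing s with
  | nil =>
    cases s with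
    | nil =>
      constructor
      · intro I₁ I₂ h
        simpa [residue, compose] using h
      · intro I₁ I₂ h
        simp [compose]
    | cons a t => simp at hlen
  | cons ψ rest ih =>
    cases s with
    | nil => simp at hlen
    | cons a srest =>
      have hlen' : rest.length = srest.length := by simpa using hlen
      have hψf : CompFriendly ψ := hfriendly ψ (by simp)
      have hψc : CostBounded ψ a := by
        have := hcost 0 (by simp)
        simpa using this
      have hrestcost : ∀ i : ℕ, (h : i < rest.length) →
          CostBounded (rest.get ⟨i, h⟩) (srest.get ⟨i, hlen' ▸ h⟩) := by
        intro i h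
        have := hcost (i + 1) (by simpa using Nat.succ_lt_succ h)
        simpa using this
      obtain ⟨ihf, ihc⟩ := ih srest hlen' (fun φ hφ => hfriendly φ (by simp [hφ]))
        hrestcost
      have hres : ∀ (W : Finset α) (T : Finset β),
          residue (compose (ψ :: rest)) W T
            = residue (compose rest) (residue ψ W T).1 (residue ψ W T).2 := by
        intro W T
        simp only [compose, residue, Finset.image_union]
        refine Prod.ext ?_ ?_ <;>
          · ext x
            simp only [Finset.mem_sdiff, Finset.mem_union]
            tauto
      constructor
      · intro I₁ I₂ h
        have h1 := hψf I₁ I₂ h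
        have h2 := ihf _ _ h1
        rw [hres I₁.1 I₁.2, hres I₂.1 I₂.2]
        exact h2
      · intro I₁ I₂ h
        have h1 := hψf I₁ I₂ h
        have hc1 := hψc I₁ I₂ h
        have hc2 := ihc _ _ h1
        show ((ψ I₁.1 I₁.2 ∪ _) \ (ψ I₂.1 I₂.2 ∪ _)).card
            + ((ψ I₂.1 I₂.2 ∪ _) \ (ψ I₁.1 I₁.2 ∪ _)).card ≤ _
        have key : ∀ A B C D : Finset (α × β),
            ((A ∪ B) \ (C ∪ D)).card ≤ (A \ C).card + (B \ D).card := by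
          intro A B C D
          refine le_trans (Finset.card_le_card ?_) (Finset.card_union_le _ _)
          intro x
          simp only [Finset.mem_sdiff, Finset.mem_union]
          tauto
        calc _ ≤ ((ψ I₁.1 I₁.2 \ ψ I₂.1 I₂.2).card + _) + ((ψ I₂.1 I₂.2 \ ψ I₁.1 I₁.2).card + _) :=
              Nat.add_le_add (key _ _ _ _) (key _ _ _ _)
          _ ≤ a + srest.sum := by omega
          _ = (a :: srest).sum := by simp
end

section
/- Consider throwing $|W|$ worker-balls and $|T|$ task-balls independently and uniformly at random into $k$ bins, with $k \le |W| = |T| \le 1.1k$, and let $X$ be the number of bins receiving at least one worker-ball and at least one task-ball. Then $\Pr[X < k/8] \le e^{-\Omega(k)}$; consequently, the $k$-bin hash with random hash functions leaves at most $1.1k - k/8 \le k$ workers unmatched except with probability $e^{-\Omega(k)}$. -/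
/-!
Rather than concentration of the number `X` of active bins, we bound the number `Z` of bins
missed by a single placement of `m ≥ n` balls into `n` bins. Expanding `(1 + t) ^ Z` as a sum
over the sets `S` of missed bins and counting the placements avoiding `S` gives
`E[(1 + t) ^ Z] = ∑_S t^|S| (1 - |S|/n)^m ≤ ∑_S (t/e)^|S| = (1 + t/e)^n`,
so with `t = 1/3` Markov's inequality yields `Pr[Z ≥ 7n/16] ≤ e^{-n/200}`.
A bin is inactive only if the workers or the tasks miss it, so `X < k/8` forces one of the two
placements to miss at least `7k/16` bins. Finally `k < m - X` with `m ≤ 1.1k` gives `X < k/10`.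
-/

open Finset

/-- The number of active bins: bins receiving at least one worker-ball and at least one
task-ball under the placements `fg.1` (workers) and `fg.2` (tasks). -/
def activeBins {m k : ℕ} (fg : (Fin m → Fin k) × (Fin m → Fin k)) : ℕ :=
  (Finset.univ.filter (fun b : Fin k => (∃ i, fg.1 i = b) ∧ (∃ j, fg.2 j = b))).card

open Real

lemma sub_pow_le_pow_mul_exp_neg {n m : ℕ} {s : ℝ} (hs₀ : 0 ≤ s) (hsn : s ≤ n)
    (hnm : n ≤ m) :
    (n - s) ^ m ≤ (n : ℝ) ^ m * exp (-s) := by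
  rcases Nat.eq_zero_or_pos n with rfl | hn
  · obtain rfl : s = 0 := le_antisymm (by simpa using hsn) hs₀
    simp
  have hn' : (0 : ℝ) < n := by exact_mod_cast hn
  have h₀ : 0 ≤ 1 - s / n := sub_nonneg.2 ((div_le_one hn').2 hsn)
  have h₁ : 1 - s / n ≤ 1 := sub_le_self _ (div_nonneg hs₀ hn'.le)
  calc (n - s) ^ m = (n : ℝ) ^ m * (1 - s / n) ^ m := by
        rw [← mul_pow, mul_sub, mul_one, mul_div_cancel₀ _ hn'.ne']
    _ ≤ (n : ℝ) ^ m * (1 - s / n) ^ n :=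
        mul_le_mul_of_nonneg_left (pow_le_pow_of_le_one h₀ h₁ hnm) (by positivity)
    _ ≤ (n : ℝ) ^ m * exp (-s) := by gcongr; exact one_sub_div_pow_le_exp_neg hsn

lemma one_add_pow_le_exp_neg_mul_pow {k r : ℕ} (hkr : 7 * k ≤ 16 * r) :
    (1 + 1 / 3 * exp (-1)) ^ k ≤ exp (-(1 / 200) * k) * (1 + 1 / 3) ^ r := by
  have hexp : exp (1 / 200) ≤ 200 / 199 := by
    convert exp_bound_div_one_sub_of_interval (x := 1 / 200) (by norm_num) (by norm_num) using 1
    norm_num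
  have hinv_e : exp (-1) ≤ 0.3678794412 := exp_neg_one_lt_d9.le
  -- `(1 + 1/(3e)) e^{1/200} ≈ 1.1283` against `(4/3)^{7/16} ≈ 1.1342`: this fixes the rate `1/200`.
  have hbase : ((1 + 1 / 3 * exp (-1)) * exp (1 / 200)) ^ 16 ≤ (1 + 1 / 3 : ℝ) ^ 7 := calc
    _ ≤ ((1 + 1 / 3 * 0.3678794412) * (200 / 199) : ℝ) ^ 16 := by gcongr
    _ ≤ (1 + 1 / 3 : ℝ) ^ 7 := by norm_num
  have key : ((1 + 1 / 3 * exp (-1)) * exp (1 / 200)) ^ k ≤ (1 + 1 / 3 : ℝ) ^ r := by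
    refine le_of_pow_le_pow_left₀ (by norm_num : 16 ≠ 0) (by positivity) ?_
    calc _ = (((1 + 1 / 3 * exp (-1)) * exp (1 / 200)) ^ 16) ^ k := by
          rw [← pow_mul, ← pow_mul, Nat.mul_comm]
      _ ≤ ((1 + 1 / 3 : ℝ) ^ 7) ^ k := by gcongr
      _ ≤ ((1 + 1 / 3 : ℝ) ^ r) ^ 16 := by
        rw [← pow_mul, ← pow_mul]; exact pow_le_pow_right₀ (by norm_num) (by omega)
  rw [mul_pow, ← exp_nat_mul] at key
  calc _ = (1 + 1 / 3 * exp (-1)) ^ k * exp (k * (1 / 200)) * exp (-(1 / 200) * k) := by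
        rw [mul_assoc, ← exp_add, show (k : ℝ) * (1 / 200) + -(1 / 200) * k = 0 by ring,
          exp_zero, mul_one]
    _ ≤ (1 + 1 / 3) ^ r * exp (-(1 / 200) * k) := by gcongr
    _ = _ := mul_comm _ _

section EmptyBins

variable {α β : Type*} [Fintype α] [DecidableEq α] [Fintype β] [DecidableEq β]

def emptyBins (f : α → β) : Finset β := (univ.image f)ᶜ

lemma card_filter_subset_emptyBins (S : Finset β) :
    #{f : α → β | S ⊆ emptyBins f} = (Fintype.card β - #S) ^ Fintype.card α := by
  have : univ.filter (fun f : α → β => S ⊆ emptyBins f) = Fintype.piFinset fun _ => Sᶜ := by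
    ext f
    rw [mem_filter, emptyBins, subset_compl_iff_disjoint_right, disjoint_comm, disjoint_left]
    simp
  rw [this, Fintype.card_piFinset, prod_const, card_compl, card_univ]

lemma sum_one_add_pow_card_emptyBins (t : ℝ) :
    ∑ f : α → β, (1 + t) ^ #(emptyBins f) =
      ∑ S : Finset β, t ^ #S * ((Fintype.card β - #S : ℕ) : ℝ) ^ Fintype.card α := by
  have expand (M : Finset β) : (1 + t) ^ #M = ∑ S, if S ⊆ M then t ^ #S else 0 := by
    simp_rw [← mem_powerset, sum_ite_mem, univ_inter, add_comm, ← sum_pow_mul_eq_add_pow,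
      one_pow, mul_one]
  simp only [expand]
  rw [sum_comm]
  refine sum_congr rfl fun S _ => ?_
  rw [← sum_filter, sum_const, card_filter_subset_emptyBins, nsmul_eq_mul, mul_comm,
    Nat.cast_pow]

lemma sum_one_add_pow_card_emptyBins_le {t : ℝ} (ht : 0 ≤ t)
    (hcard : Fintype.card β ≤ Fintype.card α) :
    ∑ f : α → β, (1 + t) ^ #(emptyBins f) ≤
      (Fintype.card β : ℝ) ^ Fintype.card α * (1 + t * exp (-1)) ^ Fintype.card β := by
  rw [sum_one_add_pow_card_emptyBins]
  calc _ ≤ ∑ S : Finset β, t ^ #S *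
        ((Fintype.card β : ℝ) ^ Fintype.card α * exp (-1) ^ #S) := by
        gcongr with S
        rw [Nat.cast_sub (card_le_univ S), ← exp_nat_mul, mul_neg_one]
        exact sub_pow_le_pow_mul_exp_neg (by positivity) (by exact_mod_cast card_le_univ S)
          hcard
    _ = (Fintype.card β : ℝ) ^ Fintype.card α *
          ∑ S : Finset β, (t * exp (-1)) ^ #S * 1 ^ (Fintype.card β - #S) := by
        simp only [mul_sum, one_pow, mul_one, mul_pow, mul_left_comm]
    _ = _ := by rw [Fintype.sum_pow_mul_eq_add_pow, add_comm]

lemma card_filter_le_card_emptyBins_mul_le {t : ℝ} (ht : 0 ≤ t)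
    (hcard : Fintype.card β ≤ Fintype.card α) (r : ℕ) :
    #{f : α → β | r ≤ #(emptyBins f)} * (1 + t) ^ r ≤
      (Fintype.card β : ℝ) ^ Fintype.card α * (1 + t * exp (-1)) ^ Fintype.card β := calc
  _ ≤ ∑ f ∈ {f : α → β | r ≤ #(emptyBins f)}, (1 + t) ^ #(emptyBins f) := by
      rw [← nsmul_eq_mul]
      exact card_nsmul_le_sum _ _ _ fun f hf =>
        pow_le_pow_right₀ (by linarith) (mem_filter.1 hf).2
  _ ≤ ∑ f : α → β, (1 + t) ^ #(emptyBins f) :=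
      sum_le_sum_of_subset_of_nonneg (subset_univ _) fun _ _ _ => by positivity
  _ ≤ _ := sum_one_add_pow_card_emptyBins_le ht hcard

lemma card_many_emptyBins_le (hcard : Fintype.card β ≤ Fintype.card α) :
    (#{f : α → β | 7 * Fintype.card β ≤ 16 * #(emptyBins f)} : ℝ) ≤
      (Fintype.card β : ℝ) ^ Fintype.card α * exp (-(1 / 200) * Fintype.card β) := by
  set r := (7 * Fintype.card β + 15) / 16
  have chernoff : #{f : α → β | r ≤ #(emptyBins f)} * (1 + 1 / 3 : ℝ) ^ r ≤
      (Fintype.card β : ℝ) ^ Fintype.card α * exp (-(1 / 200) * Fintype.card β) *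
        (1 + 1 / 3) ^ r := by
    refine (card_filter_le_card_emptyBins_mul_le (by norm_num) hcard r).trans ?_
    rw [mul_assoc]
    gcongr
    exact one_add_pow_le_exp_neg_mul_pow (by omega)
  calc _ ≤ (#{f : α → β | r ≤ #(emptyBins f)} : ℝ) :=
        Nat.cast_le.2 (card_le_card (monotone_filter_right _ fun f _ hf => by omega))
    _ ≤ _ := le_of_mul_le_mul_right chernoff (by positivity)

end EmptyBins

lemma card_filter_fst_or_snd_le {γ : Type*} [Fintype γ] [DecidableEq γ] (p : γ → Prop)
    [DecidablePred p] :
    #{x : γ × γ | p x.1 ∨ p x.2} ≤ 2 * #{x | p x} * Fintype.card γ := by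
  rw [filter_or, ← univ_product_univ, filter_product_left, filter_product_right]
  refine (card_union_le _ _).trans_eq ?_
  rw [card_product, card_product, card_univ]
  ring

section ActiveBins

variable {m k : ℕ}

lemma le_activeBins_add_card_emptyBins (fg : (Fin m → Fin k) × (Fin m → Fin k)) :
    k ≤ activeBins fg + #(emptyBins fg.1) + #(emptyBins fg.2) := calc
  k = #(univ : Finset (Fin k)) := (card_fin k).symm
  _ ≤ #((univ.filter fun b => (∃ i, fg.1 i = b) ∧ ∃ j, fg.2 j = b) ∪ emptyBins fg.1 ∪
        emptyBins fg.2) :=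
      card_le_card fun b _ => by
        simp only [emptyBins, mem_union, mem_filter, mem_univ, true_and, mem_compl, mem_image]
        tauto
  _ ≤ activeBins fg + #(emptyBins fg.1) + #(emptyBins fg.2) :=
      (card_union_le _ _).trans (Nat.add_le_add_right (card_union_le _ _) _)

lemma card_filter_activeBins_lt_le (hkm : k ≤ m) :
    (#{fg : (Fin m → Fin k) × (Fin m → Fin k) | 8 * activeBins fg < k} : ℝ) ≤
      2 * exp (-(1 / 200) * k) * Fintype.card ((Fin m → Fin k) × (Fin m → Fin k)) := by
  have many_empty := card_many_emptyBins_le (α := Fin m) (β := Fin k) (by simpa using hkm)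
  simp only [Fintype.card_fin] at many_empty
  calc _ ≤ (#{fg : (Fin m → Fin k) × (Fin m → Fin k) |
          7 * k ≤ 16 * #(emptyBins fg.1) ∨ 7 * k ≤ 16 * #(emptyBins fg.2)} : ℝ) := by
        refine Nat.cast_le.2 (card_le_card (monotone_filter_right _ fun fg _ hfew => ?_))
        have := le_activeBins_add_card_emptyBins fg
        omega
    _ ≤ 2 * #{f : Fin m → Fin k | 7 * k ≤ 16 * #(emptyBins f)} *
          (Fintype.card (Fin m → Fin k) : ℝ) := by
        exact_mod_cast card_filter_fst_or_snd_le fun f : Fin m → Fin k =>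
          7 * k ≤ 16 * #(emptyBins f)
    _ ≤ 2 * ((k : ℝ) ^ m * exp (-(1 / 200) * k)) * (Fintype.card (Fin m → Fin k) : ℝ) :=
        mul_le_mul_of_nonneg_right (mul_le_mul_of_nonneg_left many_empty zero_le_two)
          (Nat.cast_nonneg _)
    _ = _ := by simp only [Fintype.card_prod, Fintype.card_fun, Fintype.card_fin]; push_cast; ring

end ActiveBins

/-- with `m` worker-balls and `m` task-balls thrown uniformly and independently
into `k` bins, `k ≤ m ≤ 1.1k`, the number `X` of active bins satisfies
`Pr[X < k/8] ≤ e^{-Ω(k)}`; consequently the `k`-bin hash (which matches one worker per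
active bin) leaves more than `k` of the `m` workers unmatched with probability at most
`e^{-Ω(k)}`. -/
theorem active_bins_concentration :
    ∃ C c : ℝ, 0 < c ∧
      ∀ k m : ℕ, 0 < k → k ≤ m → (m : ℝ) ≤ 1.1 * k →
        (((Finset.univ.filter (fun fg : (Fin m → Fin k) × (Fin m → Fin k) =>
              (activeBins fg : ℝ) < k / 8)).card : ℝ) ≤
          C * Real.exp (-c * k) * (Fintype.card ((Fin m → Fin k) × (Fin m → Fin k)) : ℝ)) ∧
        (((Finset.univ.filter (fun fg : (Fin m → Fin k) × (Fin m → Fin k) =>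
              k < m - activeBins fg)).card : ℝ) ≤
          C * Real.exp (-c * k) * (Fintype.card ((Fin m → Fin k) × (Fin m → Fin k)) : ℝ)) := by
  refine ⟨2, 1 / 200, by norm_num, fun k m _ hkm hm => ?_⟩
  have of_imp_few_active {p : (Fin m → Fin k) × (Fin m → Fin k) → Prop} [DecidablePred p]
      (hp : ∀ fg, p fg → 8 * activeBins fg < k) :
      (#(univ.filter p) : ℝ) ≤
        2 * exp (-(1 / 200) * k) * Fintype.card ((Fin m → Fin k) × (Fin m → Fin k)) :=
    (Nat.cast_le.2 (card_le_card (monotone_filter_right _ fun fg _ => hp fg))).trans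
      (card_filter_activeBins_lt_le hkm)
  refine ⟨of_imp_few_active fun fg h => ?_, of_imp_few_active fun fg h => ?_⟩
  · rw [lt_div_iff₀ (by norm_num)] at h
    exact_mod_cast (by linarith : (8 * activeBins fg : ℝ) < k)
  · have : (activeBins fg : ℝ) + k < m := by exact_mod_cast (by omega : activeBins fg + k < m)
    exact_mod_cast (by linarith : (8 * activeBins fg : ℝ) < k)
end

section
/- If there exists a worker-task assignment function on $w$ workers and task universe $[t]$ with switching cost strictly less than $w$, then the shift graph — whose vertices are the $w$-element subsets of $[t]$ and whose edges connect $\{\tau_1, \dots, \tau_w\}$ and $\{\tau_2, \dots, \tau_{w+1}\}$ for every $\tau_1 < \tau_2 < \cdots < \tau_{w+1}$ — has a proper vertex coloring with at most $w!$ colors. -/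
open Finset

/-- if there is a worker-task assignment function `φ` on `w` workers and task
universe `[t]` with switching cost strictly less than `w`, then the shift graph — whose
vertices are the `w`-element subsets of `[t]`, with an edge between
`{τ₁, …, τ_w}` and `{τ₂, …, τ_{w+1}}` for every `τ₁ < τ₂ < ⋯ < τ_{w+1}` — has a proper
vertex coloring with at most `w!` colors. -/
theorem shift_graph_coloring (w t : ℕ) (hw : 0 < w)
    (φ : Finset (Fin t) → (Fin w → Fin t))
    (hφ : ∀ T : Finset (Fin t), T.card = w →
      Function.Injective (φ T) ∧ ∀ i, φ T i ∈ T)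
    (s : ℕ) (hs : s < w)
    (hcost : ∀ T₁ T₂ : Finset (Fin t), T₁.card = w → T₂.card = w →
      (T₁ \ T₂).card = 1 → (T₂ \ T₁).card = 1 →
      (Finset.univ.filter (fun i => φ T₁ i ≠ φ T₂ i)).card ≤ s) :
    ∃ c : Finset (Fin t) → Fin (Nat.factorial w),
      ∀ τ : Fin (w + 1) → Fin t, StrictMono τ →
        c (Finset.univ.image (fun j : Fin w => τ j.castSucc)) ≠
        c (Finset.univ.image (fun j : Fin w => τ j.succ)) := by
  classical
  have hmem : ∀ (T : Finset (Fin t)) (h : T.card = w) (i : Fin w), φ T i ∈ T :=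
    fun T h i => (hφ T h).2 i
  set pat : ∀ (T : Finset (Fin t)), T.card = w → (Fin w → Fin w) := fun T h =>
    fun i => (T.orderIsoOfFin h).symm ⟨φ T i, hmem T h i⟩ with hpat
  have hpat_inj : ∀ (T : Finset (Fin t)) (h : T.card = w), Function.Injective (pat T h) := by
    intro T h a b hab
    have := (T.orderIsoOfFin h).symm.injective hab
    exact (hφ T h).1 (congrArg Subtype.val this)
  have hpat_bij : ∀ (T : Finset (Fin t)) (h : T.card = w), Function.Bijective (pat T h) :=
    fun T h => (Finite.injective_iff_bijective).1 (hpat_inj T h)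
  have hcardperm : Fintype.card (Equiv.Perm (Fin w)) = Nat.factorial w := by
    simp [Fintype.card_perm]
  set enc : Equiv.Perm (Fin w) → Fin (Nat.factorial w) := fun π =>
    Fin.cast hcardperm (Fintype.equivFin (Equiv.Perm (Fin w)) π) with henc
  have henc_inj : Function.Injective enc := fun a b hab =>
    (Fintype.equivFin (Equiv.Perm (Fin w))).injective ((Fin.cast_injective hcardperm) hab)
  set c : Finset (Fin t) → Fin (Nat.factorial w) := fun T =>
    if h : T.card = w then enc (Equiv.ofBijective _ (hpat_bij T h))
    else ⟨0, Nat.factorial_pos w⟩ with hc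
  refine ⟨c, ?_⟩
  intro τ hτ hcon
  set T₁ := Finset.univ.image (fun j : Fin w => τ j.castSucc) with hT₁
  set T₂ := Finset.univ.image (fun j : Fin w => τ j.succ) with hT₂
  have hm₁ : StrictMono (fun j : Fin w => τ j.castSucc) := hτ.comp Fin.strictMono_castSucc
  have hm₂ : StrictMono (fun j : Fin w => τ j.succ) := hτ.comp (Fin.strictMono_succ)
  have h₁ : T₁.card = w := by
    rw [hT₁, card_image_of_injective _ hm₁.injective, card_univ, Fintype.card_fin]
  have h₂ : T₂.card = w := by
    rw [hT₂, card_image_of_injective _ hm₂.injective, card_univ, Fintype.card_fin]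
  -- identify the order embeddings
  have hemb₁ : (fun j : Fin w => τ j.castSucc) = T₁.orderEmbOfFin h₁ :=
    orderEmbOfFin_unique h₁ (fun x => mem_image_of_mem _ (mem_univ x)) hm₁
  have hemb₂ : (fun j : Fin w => τ j.succ) = T₂.orderEmbOfFin h₂ :=
    orderEmbOfFin_unique h₂ (fun x => mem_image_of_mem _ (mem_univ x)) hm₂
  -- equal colors give equal patterns
  have hpc : pat T₁ h₁ = pat T₂ h₂ := by
    rw [hc] at hcon
    simp only [dif_pos h₁, dif_pos h₂] at hcon
    have := henc_inj hcon
    exact congrArg (fun e : Equiv.Perm (Fin w) => (⇑e : Fin w → Fin w)) this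
  -- all workers change
  have hall : ∀ i : Fin w, φ T₁ i ≠ φ T₂ i := by
    intro i
    have e₁ : φ T₁ i = τ (pat T₁ h₁ i).castSucc := by
      have : (T₁.orderIsoOfFin h₁) (pat T₁ h₁ i) = ⟨φ T₁ i, hmem T₁ h₁ i⟩ := by
        simp [hpat]
      have := congrArg Subtype.val this
      rw [coe_orderIsoOfFin_apply, ← hemb₁] at this
      exact this.symm
    have e₂ : φ T₂ i = τ (pat T₁ h₁ i).succ := by
      have : (T₂.orderIsoOfFin h₂) (pat T₂ h₂ i) = ⟨φ T₂ i, hmem T₂ h₂ i⟩ := by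
        simp [hpat]
      have := congrArg Subtype.val this
      rw [coe_orderIsoOfFin_apply, ← hemb₂, ← hpc] at this
      exact this.symm
    rw [e₁, e₂]
    intro h
    have := hτ.injective h
    have := congrArg Fin.val this
    simp [Fin.val_succ] at this
  -- the symmetric differences are singletons
  have hd₁ : T₁ \ T₂ = {τ 0} := by
    ext x
    simp only [mem_sdiff, mem_singleton, hT₁, hT₂, mem_image, mem_univ, true_and]
    constructor
    · rintro ⟨⟨j, rfl⟩, hnot⟩
      by_contra hne
      have hj : (j : ℕ) ≠ 0 := by
        intro h0
        apply hne
        congr 1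
        exact Fin.ext (by simp [h0])
      exact hnot ⟨⟨(j : ℕ) - 1, by omega⟩, by congr 1; exact Fin.ext (by simp; omega)⟩
    · rintro rfl
      constructor
      · exact ⟨⟨0, hw⟩, by congr 1⟩
      · rintro ⟨j, hj⟩
        have := hτ.injective hj
        have := congrArg Fin.val this
        simp [Fin.val_succ] at this
  have hd₂ : T₂ \ T₁ = {τ (Fin.last w)} := by
    ext x
    simp only [mem_sdiff, mem_singleton, hT₁, hT₂, mem_image, mem_univ, true_and]
    constructor
    · rintro ⟨⟨j, rfl⟩, hnot⟩
      by_contra hne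
      have hj : (j : ℕ) + 1 ≠ w := by
        intro h0
        apply hne
        congr 1
        exact Fin.ext (by simp [Fin.val_succ, h0, Fin.val_last])
      have hjw : (j : ℕ) + 1 < w := lt_of_le_of_ne j.2 hj
      exact hnot ⟨⟨(j : ℕ) + 1, hjw⟩, by congr 1⟩
    · rintro rfl
      constructor
      · exact ⟨⟨w - 1, by omega⟩, by congr 1; exact Fin.ext (by simp only [Fin.val_succ, Fin.val_last]; omega)⟩
      · rintro ⟨j, hj⟩
        have := congrArg Fin.val (hτ.injective hj)
        simp [Fin.val_last] at this
        omega
  have := hcost T₁ T₂ h₁ h₂ (by rw [hd₁]; simp) (by rw [hd₂]; simp)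
  rw [filter_true_of_mem (fun i _ => hall i)] at this
  rw [card_univ, Fintype.card_fin] at this
  omega
end

section
/- Suppose there exists a worker-task assignment function $\psi$ mapping workers $\{1, \dots, k\}$ to task sets $T \subseteq [n]$ of size $k$ with switching cost $s$. Define $\phi : \mathcal{H}_n^k \to \mathcal{H}_k(n)$ by letting the $i$-th coordinate of $\phi(\vec{x})$ be the task assigned to worker $i$ by $\psi(T(\vec{x}))$, where $T(\vec{x}) = \{j : x_j = 1\}$. Then for all $\vec{x}, \vec{y} \in \mathcal{H}_n^k$: $\operatorname{Ham}(\vec{x}, \vec{y})/2 \le \operatorname{Ham}(\phi(\vec{x}), \phi(\vec{y})) \le s \cdot \operatorname{Ham}(\vec{x}, \vec{y})$. -/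
open Finset

lemma path_lemma {n k s : ℕ}
    (ψ : Finset (Fin n) → (Fin k → Fin n))
    (hcost : ∀ T₁ T₂ : Finset (Fin n), T₁.card = k → T₂.card = k →
      (T₁ \ T₂).card = 1 → (T₂ \ T₁).card = 1 →
      (Finset.univ.filter (fun i => ψ T₁ i ≠ ψ T₂ i)).card ≤ s) :
    ∀ d (T₁ T₂ : Finset (Fin n)), T₁.card = k → T₂.card = k →
      (T₁ \ T₂).card = d →
      (Finset.univ.filter (fun i => ψ T₁ i ≠ ψ T₂ i)).card ≤ s * d := by
  intro d
  induction d with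
  | zero =>
    intro T₁ T₂ h1 h2 hd
    have hsub : T₁ ⊆ T₂ := by
      rw [Finset.card_eq_zero, Finset.sdiff_eq_empty_iff_subset] at hd
      exact hd
    have : T₁ = T₂ := Finset.eq_of_subset_of_card_le hsub (by omega)
    subst this
    simp
  | succ d ih =>
    intro T₁ T₂ h1 h2 hd
    have hcap : (T₁ \ T₂).card = (T₂ \ T₁).card := by
      have h1' := Finset.card_sdiff_add_card_inter T₁ T₂
      have h2' := Finset.card_sdiff_add_card_inter T₂ T₁
      rw [Finset.inter_comm] at h2'
      omega
    obtain ⟨a, ha⟩ : (T₁ \ T₂).Nonempty := by rw [← Finset.card_pos]; omega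
    obtain ⟨b, hb⟩ : (T₂ \ T₁).Nonempty := by rw [← Finset.card_pos]; omega
    obtain ⟨haT1, haT2⟩ := Finset.mem_sdiff.mp ha
    obtain ⟨hbT2, hbT1⟩ := Finset.mem_sdiff.mp hb
    have hab : a ≠ b := fun h => hbT1 (h ▸ haT1)
    set T' : Finset (Fin n) := insert b (T₁.erase a) with hT'
    have hT'card : T'.card = k := by
      rw [hT', Finset.card_insert_of_notMem (by simp [hbT1]),
        Finset.card_erase_of_mem haT1]
      have : 1 ≤ T₁.card := Finset.card_pos.mpr ⟨a, haT1⟩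
      omega
    have h12 : T₁ \ T' = {a} := by
      ext j
      simp only [hT', Finset.mem_sdiff, Finset.mem_insert, Finset.mem_erase,
        Finset.mem_singleton]
      constructor
      · rintro ⟨hj, hj2⟩
        by_contra hja
        exact hj2 (Or.inr ⟨hja, hj⟩)
      · rintro rfl
        exact ⟨haT1, by tauto⟩
    have h21 : T' \ T₁ = {b} := by
      ext j
      simp only [hT', Finset.mem_sdiff, Finset.mem_insert, Finset.mem_erase,
        Finset.mem_singleton]
      constructor
      · rintro ⟨hj, hj2⟩; tauto
      · rintro rfl; exact ⟨Or.inl rfl, hbT1⟩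
    have h1T' : (T₁ \ T').card = 1 := by rw [h12]; simp
    have h2T' : (T' \ T₁).card = 1 := by rw [h21]; simp
    have hTT2 : T' \ T₂ = (T₁ \ T₂).erase a := by
      ext j
      simp only [hT', Finset.mem_sdiff, Finset.mem_insert, Finset.mem_erase]
      constructor
      · rintro ⟨hj | ⟨hja, hj⟩, hj2⟩
        · exact absurd (hj ▸ hbT2) hj2
        · exact ⟨hja, hj, hj2⟩
      · rintro ⟨hja, hj, hj2⟩
        exact ⟨Or.inr ⟨hja, hj⟩, hj2⟩
    have hTT2card : (T' \ T₂).card = d := by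
      rw [hTT2, Finset.card_erase_of_mem ha, hd]; omega
    have step1 := hcost T₁ T' h1 hT'card h1T' h2T'
    have step2 := ih T' T₂ hT'card h2 hTT2card
    have hsubu : (Finset.univ.filter (fun i => ψ T₁ i ≠ ψ T₂ i)) ⊆
        (Finset.univ.filter (fun i => ψ T₁ i ≠ ψ T' i)) ∪
        (Finset.univ.filter (fun i => ψ T' i ≠ ψ T₂ i)) := by
      intro i hi
      simp only [Finset.mem_filter, Finset.mem_union, Finset.mem_univ, true_and] at *
      by_contra h
      push_neg at h
      exact hi (h.1.trans h.2)
    calc (Finset.univ.filter (fun i => ψ T₁ i ≠ ψ T₂ i)).card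
        ≤ _ := Finset.card_le_card hsubu
      _ ≤ _ + _ := Finset.card_union_le _ _
      _ ≤ s + s * d := Nat.add_le_add step1 step2
      _ = s * (d + 1) := by ring

lemma lower_lemma {n k : ℕ} (f g : Fin k → Fin n) (Tx Ty : Finset (Fin n))
    (hTx : Tx.card = k) (hf : Function.Injective f) (hfm : ∀ i, f i ∈ Tx)
    (hg : ∀ i, g i ∈ Ty) :
    (Tx \ Ty).card ≤ (Finset.univ.filter (fun i => f i ≠ g i)).card := by
  have himg : Finset.univ.image f = Tx := by
    apply Finset.eq_of_subset_of_card_le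
    · intro a ha
      obtain ⟨i, _, rfl⟩ := Finset.mem_image.mp ha
      exact hfm i
    · rw [Finset.card_image_of_injective _ hf]
      simp [hTx]
  have hsub : Tx \ Ty ⊆ (Finset.univ.filter (fun i => f i ≠ g i)).image f := by
    intro a ha
    obtain ⟨haTx, haTy⟩ := Finset.mem_sdiff.mp ha
    rw [← himg] at haTx
    obtain ⟨i, _, rfl⟩ := Finset.mem_image.mp haTx
    apply Finset.mem_image.mpr
    refine ⟨i, ?_, rfl⟩
    simp only [Finset.mem_filter, Finset.mem_univ, true_and]
    intro h
    exact haTy (h ▸ hg i)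
  calc (Tx \ Ty).card ≤ _ := Finset.card_le_card hsub
    _ ≤ _ := Finset.card_image_le

/-- from a worker-task assignment function `ψ` (workers `[k]`, task universe
`[n]`) with switching cost `s`, the map `φ` sending a binary vector `x` with `k` ones to
the `k`-dimensional vector whose `i`-th coordinate is the task assigned to worker `i` on
the task set `T(x) = {j : x_j = 1}` satisfies, for all `x, y` with exactly `k` ones,
`Ham(x,y)/2 ≤ Ham(φ(x), φ(y)) ≤ s · Ham(x,y)`. -/
theorem embedding_distortion (n k s : ℕ)
    (ψ : Finset (Fin n) → (Fin k → Fin n))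
    (hψ : ∀ T : Finset (Fin n), T.card = k →
      Function.Injective (ψ T) ∧ ∀ i, ψ T i ∈ T)
    (hcost : ∀ T₁ T₂ : Finset (Fin n), T₁.card = k → T₂.card = k →
      (T₁ \ T₂).card = 1 → (T₂ \ T₁).card = 1 →
      (Finset.univ.filter (fun i => ψ T₁ i ≠ ψ T₂ i)).card ≤ s)
    (x y : Fin n → Bool)
    (hx : (Finset.univ.filter (fun j => x j = true)).card = k)
    (hy : (Finset.univ.filter (fun j => y j = true)).card = k) :
    (Finset.univ.filter (fun j => x j ≠ y j)).card ≤
        2 * (Finset.univ.filter (fun i : Fin k =>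
              ψ (Finset.univ.filter (fun j => x j = true)) i ≠
              ψ (Finset.univ.filter (fun j => y j = true)) i)).card ∧
      (Finset.univ.filter (fun i : Fin k =>
            ψ (Finset.univ.filter (fun j => x j = true)) i ≠
            ψ (Finset.univ.filter (fun j => y j = true)) i)).card ≤
        s * (Finset.univ.filter (fun j => x j ≠ y j)).card := by
  set Tx := Finset.univ.filter (fun j => x j = true) with hTxdef
  set Ty := Finset.univ.filter (fun j => y j = true) with hTydef
  have hunion : Finset.univ.filter (fun j => x j ≠ y j) = (Tx \ Ty) ∪ (Ty \ Tx) := by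
    ext j
    simp only [hTxdef, hTydef, Finset.mem_filter, Finset.mem_union, Finset.mem_sdiff,
      Finset.mem_univ, true_and]
    cases hxj : x j <;> cases hyj : y j <;> simp
  have hdisj : Disjoint (Tx \ Ty) (Ty \ Tx) :=
    disjoint_sdiff_sdiff
  have hcap : (Tx \ Ty).card = (Ty \ Tx).card := by
    have h1' := Finset.card_sdiff_add_card_inter Tx Ty
    have h2' := Finset.card_sdiff_add_card_inter Ty Tx
    rw [Finset.inter_comm] at h2'
    omega
  have hham : (Finset.univ.filter (fun j => x j ≠ y j)).card = 2 * (Tx \ Ty).card := by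
    rw [hunion, Finset.card_union_of_disjoint hdisj]
    omega
  obtain ⟨hinjx, hmemx⟩ := hψ Tx hx
  obtain ⟨hinjy, hmemy⟩ := hψ Ty hy
  constructor
  · rw [hham]
    have := lower_lemma (ψ Tx) (ψ Ty) Tx Ty hx hinjx hmemx hmemy
    omega
  · have := path_lemma ψ hcost (Tx \ Ty).card Tx Ty hx hy rfl
    rw [hham]
    calc (Finset.univ.filter (fun i => ψ Tx i ≠ ψ Ty i)).card
        ≤ s * (Tx \ Ty).card := this
      _ ≤ s * (2 * (Tx \ Ty).card) := Nat.mul_le_mul_left s (by omega)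
end
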